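/- arXiv:math/0503480 — 5 statements merged into one kernel-verified Lean document; each statement's English description precedes it below -/
import Mathlib

section
/- If G is a nontrivial Salem graph, then τ(G) is a Salem number. -/
open Polynomial

/-- The multiset of eigenvalues of the adjacency matrix of a finite simple graph. -/
noncomputable def adjEigs {V : Type} [Fintype V] (G : SimpleGraph V) : Multiset ℝ :=
  letI := Classical.decEq V
  letI := Classical.decRel G.Adj
  ((SimpleGraph.adjMatrix ℝ G).charpoly).roots
/-- A Salem number: a real algebraic integer `τ > 1` whose conjugates other than `τ`
all have modulus at most 1, with at least one conjugate of modulus exactly 1. -/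
def IsSalem (τ : ℝ) : Prop :=
  1 < τ ∧ ∃ p : Polynomial ℤ, p.Monic ∧ Irreducible p ∧
    Polynomial.aeval (τ : ℂ) p = 0 ∧
    (∀ z : ℂ, Polynomial.aeval z p = 0 → z ≠ (τ : ℂ) → ‖z‖ ≤ 1) ∧
    (∃ z : ℂ, Polynomial.aeval z p = 0 ∧ ‖z‖ = 1)

/-- A Pisot number: a real algebraic integer `θ > 1` whose conjugates other than `θ`
all have modulus strictly less than 1. -/
def IsPisot (θ : ℝ) : Prop :=
  1 < θ ∧ ∃ p : Polynomial ℤ, p.Monic ∧ Irreducible p ∧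
    Polynomial.aeval (θ : ℂ) p = 0 ∧
    (∀ z : ℂ, Polynomial.aeval z p = 0 → z ≠ (θ : ℂ) → ‖z‖ < 1)
/-- A Salem graph, together with its index `lam`: `lam` is the largest eigenvalue,
`lam > 2` is the only eigenvalue greater than 2, and either the graph is nonbipartite
with no eigenvalue below `-2`, or bipartite with `-lam` its only eigenvalue below `-2`. -/
def IsSalemGraph {V : Type} [Fintype V] (G : SimpleGraph V) (lam : ℝ) : Prop :=
  lam ∈ adjEigs G ∧ (∀ μ ∈ adjEigs G, μ ≤ lam) ∧ 2 < lam ∧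
  Multiset.card ((adjEigs G).filter (fun μ => 2 < μ)) = 1 ∧
  ((¬ G.Colorable 2 ∧ ∀ μ ∈ adjEigs G, -2 ≤ μ) ∨
   (G.Colorable 2 ∧ ∀ μ ∈ adjEigs G, μ < -2 → μ = -lam))

/-- A trivial Salem graph: nonbipartite with `lam ∈ ℤ`, or bipartite with `lam² ∈ ℤ`. -/
def IsTrivialSalemGraph {V : Type} [Fintype V] (G : SimpleGraph V) (lam : ℝ) : Prop :=
  (¬ G.Colorable 2 ∧ ∃ k : ℤ, lam = k) ∨ (G.Colorable 2 ∧ ∃ k : ℤ, lam ^ 2 = k)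

/-- The defining relation for `τ(G)`, the Salem number associated to a Salem graph:
`τ > 1` with `τ + 1/τ = lam` in the nonbipartite case, `√τ + 1/√τ = lam` in the
bipartite case. -/
def IsGraphSalemTau {V : Type} [Fintype V] (G : SimpleGraph V) (lam t : ℝ) : Prop :=
  1 < t ∧ ((¬ G.Colorable 2 ∧ t + 1 / t = lam) ∨
           (G.Colorable 2 ∧ Real.sqrt t + 1 / Real.sqrt t = lam))

/-!
Put `θ = λ` for a nonbipartite and `θ = λ² - 2` for a bipartite Salem graph, so that
`τ + τ⁻¹ = θ`. As an integer polynomial in `λ`, whose conjugates are eigenvalues, `θ` is an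
algebraic integer all of whose conjugates other than `θ` are real numbers in `[-2, 2]`, and it
is irrational since the graph is nontrivial. Embedding `ℚ(τ)` into `ℂ` shows that the conjugates
of `τ` are exactly the `z` with `z + z⁻¹` a conjugate of `θ`: for `z + z⁻¹ = θ` this forces
`z ∈ {τ, τ⁻¹}`, and otherwise `z² - θ'z + 1` with `|θ'| ≤ 2` has both roots on the unit circle.
An irrational `θ` has a conjugate `θ' ≠ θ`, which lifts to a conjugate of `τ` of modulus one.
-/

open IntermediateField

section Conjugates

variable {K L : Type*} [Field K] [Field L] [Algebra K L] [IsAlgClosed L]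

theorem aeval_minpoly_eq_zero_iff_exists_algHom {x : L} (hx : IsIntegral K x) (y : K⟮x⟯) (w : L) :
    aeval w (minpoly K (y : L)) = 0 ↔ ∃ σ : K⟮x⟯ →ₐ[K] L, σ y = w := by
  constructor
  · intro hw
    exact exists_algHom_adjoin_of_splits_of_aeval
      (fun _ hs => (Set.mem_singleton_iff.mp hs) ▸ ⟨hx, IsAlgClosed.splits _⟩) y.2 hw
  · rintro ⟨σ, rfl⟩
    rw [← minpoly_eq]
    exact minpoly.aeval_algHom (f := σ) (x := y)

theorem aeval_minpoly_eq_zero_iff_exists_algHom_gen {x : L} (hx : IsIntegral K x) (z : L) :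
    aeval z (minpoly K x) = 0 ↔ ∃ σ : K⟮x⟯ →ₐ[K] L, σ (AdjoinSimple.gen K x) = z :=
  aeval_minpoly_eq_zero_iff_exists_algHom hx (AdjoinSimple.gen K x) z

theorem aeval_minpoly_add_inv_eq_zero_iff {x : L} (hx : IsIntegral K x) (w : L) :
    aeval w (minpoly K (x + x⁻¹)) = 0 ↔ ∃ z, aeval z (minpoly K x) = 0 ∧ z + z⁻¹ = w := by
  have := aeval_minpoly_eq_zero_iff_exists_algHom hx
    (AdjoinSimple.gen K x + (AdjoinSimple.gen K x)⁻¹) w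
  simp only [IntermediateField.coe_add, IntermediateField.coe_inv, AdjoinSimple.coe_gen, map_add,
    map_inv₀] at this
  simp only [this, aeval_minpoly_eq_zero_iff_exists_algHom_gen hx, exists_exists_eq_and]

theorem exists_aeval_minpoly_eq_zero_of_aeval_minpoly_aeval {x w : L} (hx : IsIntegral K x)
    (f : K[X]) (hw : aeval w (minpoly K (aeval x f)) = 0) :
    ∃ z, aeval z (minpoly K x) = 0 ∧ aeval z f = w := by
  have := aeval_minpoly_eq_zero_iff_exists_algHom hx (aeval (AdjoinSimple.gen K x) f) w
  rw [show ((aeval (AdjoinSimple.gen K x) f : K⟮x⟯) : L) = aeval x f by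
    rw [← AdjoinSimple.algebraMap_gen K x, aeval_algebraMap_apply]; rfl] at this
  obtain ⟨σ, rfl⟩ := this.mp hw
  exact ⟨σ (AdjoinSimple.gen K x), (aeval_minpoly_eq_zero_iff_exists_algHom_gen hx _).mpr ⟨σ, rfl⟩,
    aeval_algHom_apply σ _ f⟩

theorem exists_aeval_minpoly_eq_zero_ne [PerfectField K] {x : L} (hx : IsIntegral K x)
    (hxK : x ∉ (algebraMap K L).range) : ∃ w, aeval w (minpoly K x) = 0 ∧ w ≠ x := by
  classical
  have hcard : 1 < Fintype.card ((minpoly K x).rootSet L) := by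
    rw [card_rootSet_eq_natDegree (PerfectField.separable_of_irreducible (minpoly.irreducible hx))
      (IsAlgClosed.splits _)]
    exact (minpoly.two_le_natDegree_iff hx).mpr hxK
  obtain ⟨⟨w, hw⟩, hne⟩ := Fintype.exists_ne_of_one_lt_card hcard
    ⟨x, (mem_rootSet_of_ne (minpoly.ne_zero hx)).mpr (minpoly.aeval K x)⟩
  exact ⟨w, (mem_rootSet_of_ne (minpoly.ne_zero hx)).mp hw, fun h => hne (Subtype.ext h)⟩

end Conjugates

theorem IsIntegral.of_add_inv {R F : Type*} [CommRing R] [Field F] [Algebra R F] {x : F}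
    (h : IsIntegral R (x + x⁻¹)) : IsIntegral R x := by
  rcases eq_or_ne x 0 with rfl | hx
  · exact isIntegral_zero
  have hdeg : (X ^ 2 - C (x + x⁻¹) * X : F[X]).natDegree = 2 := by
    compute_degree!
  refine .of_aeval_monic_of_isIntegral_coeff (p := X ^ 2 - C (x + x⁻¹) * X) ?_ (by omega) ?_ ?_
  · monicity!
  · have : x ^ 2 - (x + x⁻¹) * x = -1 := by field_simp; ring
    simpa [this] using isIntegral_one.neg
  · intro i
    rcases i with _ | _ | _ | i
    · simpa using isIntegral_zero
    · simpa [coeff_X, add_comm] using h.neg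
    · simpa using isIntegral_one
    · simpa [coeff_X, coeff_X_pow] using isIntegral_zero

theorem ne_zero_of_aeval_minpoly_eq_zero {K L : Type*} [Field K] [Field L]
    [Algebra K L] {x z : L} (hx : IsIntegral K x) (hx0 : x ≠ 0)
    (hz : aeval z (minpoly K x) = 0) : z ≠ 0 := by
  rintro rfl
  rw [← coeff_zero_eq_aeval_zero', map_eq_zero_iff _ (algebraMap K L).injective] at hz
  exact minpoly.coeff_zero_ne_zero hx hx0 hz

theorem exists_intCast_eq_of_isIntegral_of_mem_range {L : Type*} [Field L] [CharZero L] {x : L}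
    (hx : IsIntegral ℤ x) (hxQ : x ∈ (algebraMap ℚ L).range) : ∃ k : ℤ, x = k := by
  obtain ⟨r, rfl⟩ := hxQ
  obtain ⟨k, rfl⟩ := IsIntegrallyClosed.isIntegral_iff.mp
    ((isIntegral_algebraMap_iff (algebraMap ℚ L).injective).mp hx)
  exact ⟨k, by simp⟩

theorem eq_or_eq_inv_of_add_inv_eq_add_inv {F : Type*} [Field F] {z a : F} (hz : z ≠ 0)
    (ha : a ≠ 0) (h : z + z⁻¹ = a + a⁻¹) : z = a ∨ z = a⁻¹ := by
  have hfac : (z - a) * (z - a⁻¹) = 0 := by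
    linear_combination z * h + mul_inv_cancel₀ ha - mul_inv_cancel₀ hz
  rcases mul_eq_zero.mp hfac with h | h
  · exact .inl (sub_eq_zero.mp h)
  · exact .inr (sub_eq_zero.mp h)

theorem Complex.norm_eq_one_of_add_inv_eq_ofReal {z : ℂ} {μ : ℝ} (hz : z ≠ 0)
    (h : z + z⁻¹ = μ) (hμ : |μ| ≤ 2) : ‖z‖ = 1 := by
  have hn : normSq z ≠ 0 := normSq_eq_zero.not.mpr hz
  have him : z.im * (normSq z - 1) = 0 := by
    have := congrArg im h
    simp only [add_im, inv_im, ofReal_im] at this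
    field_simp at this
    linear_combination this
  rcases mul_eq_zero.mp him with him | hn1
  · have hre := congrArg re h
    have hr : z.re ≠ 0 := fun h0 => hz (Complex.ext h0 him)
    simp only [add_re, inv_re, ofReal_re, normSq_apply, him, mul_zero, add_zero] at hre
    field_simp at hre
    rw [Complex.norm_def, normSq_apply, him, mul_zero, add_zero, Real.sqrt_mul_self_eq_abs]
    have hle : μ * z.re ≤ 2 * |z.re| := by
      calc μ * z.re ≤ |μ| * |z.re| := by rw [← abs_mul]; exact le_abs_self _
        _ ≤ 2 * |z.re| := by gcongr
    nlinarith [sq_abs z.re, abs_nonneg z.re]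
  · rw [Complex.norm_def, sub_eq_zero.mp hn1, Real.sqrt_one]

theorem add_inv_eq_sq_sub_two_of_sqrt_add_inv_eq {t lam : ℝ} (ht : 0 < t)
    (h : √t + 1 / √t = lam) : t + t⁻¹ = lam ^ 2 - 2 := by
  have hs0 : √t ≠ 0 := (Real.sqrt_pos.mpr ht).ne'
  calc t + t⁻¹ = √t ^ 2 + (√t ^ 2)⁻¹ := by rw [Real.sq_sqrt ht.le]
    _ = (√t + 1 / √t) ^ 2 - 2 := by field_simp; ring
    _ = lam ^ 2 - 2 := by rw [h]

theorem isSalem_of_add_inv_eq {θ t : ℝ} (hθ : IsIntegral ℤ θ) (hθℤ : ¬∃ k : ℤ, θ = k)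
    (hconj : ∀ w : ℂ, aeval w (minpoly ℚ (θ : ℂ)) = 0 → w ≠ θ → ∃ μ : ℝ, w = μ ∧ |μ| ≤ 2)
    (ht : 1 < t) (hrel : t + t⁻¹ = θ) : IsSalem t := by
  have hT0 : (t : ℂ) ≠ 0 := by exact_mod_cast (zero_lt_one.trans ht).ne'
  have hrelC : (t : ℂ) + (t : ℂ)⁻¹ = θ := by exact_mod_cast hrel
  have hθC : IsIntegral ℤ (θ : ℂ) := hθ.algebraMap
  have hT : IsIntegral ℤ (t : ℂ) := .of_add_inv (hrelC ▸ hθC)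
  have hroots (z : ℂ) : aeval z (minpoly ℤ (t : ℂ)) = 0 ↔ aeval z (minpoly ℚ (t : ℂ)) = 0 := by
    rw [minpoly.isIntegrallyClosed_eq_field_fractions' ℚ hT, aeval_map_algebraMap]
  have hconjT := aeval_minpoly_add_inv_eq_zero_iff (K := ℚ) hT.tower_top
  rw [hrelC] at hconjT
  refine ⟨ht, minpoly ℤ (t : ℂ), minpoly.monic hT, minpoly.irreducible hT, minpoly.aeval ℤ _,
    fun z hz hzt => ?_, ?_⟩
  · rw [hroots] at hz
    have hz0 := ne_zero_of_aeval_minpoly_eq_zero hT.tower_top hT0 hz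
    have hw := (hconjT (z + z⁻¹)).mpr ⟨z, hz, rfl⟩
    by_cases hzθ : z + z⁻¹ = θ
    · rcases eq_or_eq_inv_of_add_inv_eq_add_inv hz0 hT0 (hzθ.trans hrelC.symm) with h | rfl
      · exact absurd h hzt
      · rw [norm_inv, Complex.norm_real, Real.norm_of_nonneg (zero_lt_one.trans ht).le]
        exact inv_le_one_of_one_le₀ ht.le
    · obtain ⟨μ, hμ, hμ2⟩ := hconj _ hw hzθ
      exact (Complex.norm_eq_one_of_add_inv_eq_ofReal hz0 hμ hμ2).le
  · have hθQ : (θ : ℂ) ∉ (algebraMap ℚ ℂ).range := fun h => by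
      obtain ⟨k, hk⟩ := exists_intCast_eq_of_isIntegral_of_mem_range hθC h
      exact hθℤ ⟨k, by exact_mod_cast hk⟩
    obtain ⟨w, hw, hwθ⟩ := exists_aeval_minpoly_eq_zero_ne hθC.tower_top hθQ
    obtain ⟨μ, rfl, hμ2⟩ := hconj w hw hwθ
    obtain ⟨z, hz, hzμ⟩ := (hconjT μ).mp hw
    exact ⟨z, (hroots z).mpr hz, Complex.norm_eq_one_of_add_inv_eq_ofReal
      (ne_zero_of_aeval_minpoly_eq_zero hT.tower_top hT0 hz) hzμ hμ2⟩

theorem Matrix.IsHermitian.exists_ofReal_eq_of_aeval_charpoly {n : Type*} [Fintype n]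
    [DecidableEq n] {A : Matrix n n ℝ} (hA : A.IsHermitian) {z : ℂ}
    (hz : aeval z A.charpoly = 0) : ∃ μ ∈ A.charpoly.roots, (μ : ℂ) = z := by
  rw [aeval_def, eval₂_eq_eval_map, ← IsRoot,
    ← mem_roots (A.charpoly_monic.map _).ne_zero, hA.splits_charpoly.roots_map] at hz
  simpa using hz

namespace SimpleGraph

variable {V : Type} [Fintype V] (G : SimpleGraph V)

omit [Fintype V] in
theorem map_adjMatrix [DecidableRel G.Adj] {R S : Type*} [Semiring R] [Semiring S]
    (f : R →+* S) : (G.adjMatrix R).map f = G.adjMatrix S := by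
  ext i j
  simp [adjMatrix_apply, apply_ite f]

theorem aeval_charpoly_adjMatrix [DecidableEq V] [DecidableRel G.Adj] {R S A : Type*}
    [CommRing R] [CommRing S] [CommRing A] [Algebra R S] [Algebra R A] [Algebra S A]
    [IsScalarTower R S A] (x : A) :
    aeval x (G.adjMatrix R).charpoly = aeval x (G.adjMatrix S).charpoly := by
  rw [← aeval_map_algebraMap S, ← Matrix.charpoly_map, map_adjMatrix]

theorem adjEigs_eq_roots_charpoly [DecidableEq V] [DecidableRel G.Adj] :
    adjEigs G = (G.adjMatrix ℝ).charpoly.roots := by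
  unfold adjEigs
  congr!

theorem aeval_charpoly_adjMatrix_eq_zero [DecidableEq V] [DecidableRel G.Adj] {R : Type*}
    [CommRing R] [Algebra R ℝ] {lam : ℝ} (hlam : lam ∈ adjEigs G) :
    aeval lam (G.adjMatrix R).charpoly = 0 := by
  rw [adjEigs_eq_roots_charpoly] at hlam
  rw [G.aeval_charpoly_adjMatrix (S := ℝ), coe_aeval_eq_eval]
  exact isRoot_of_mem_roots hlam

theorem isIntegral_of_mem_adjEigs {lam : ℝ} (hlam : lam ∈ adjEigs G) : IsIntegral ℤ lam := by
  classical
  exact ⟨(G.adjMatrix ℤ).charpoly, Matrix.charpoly_monic _,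
    (aeval_def lam _).symm.trans (G.aeval_charpoly_adjMatrix_eq_zero hlam)⟩

theorem exists_mem_adjEigs_of_aeval_minpoly {lam : ℝ} (hlam : lam ∈ adjEigs G) {z : ℂ}
    (hz : aeval z (minpoly ℚ (lam : ℂ)) = 0) : ∃ μ ∈ adjEigs G, (μ : ℂ) = z := by
  classical
  have hlamC : aeval (lam : ℂ) (G.adjMatrix ℚ).charpoly = 0 := by
    rw [← Complex.coe_algebraMap, aeval_algebraMap_apply,
      G.aeval_charpoly_adjMatrix_eq_zero hlam, map_zero]
  obtain ⟨q, hq⟩ := minpoly.dvd ℚ _ hlamC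
  rw [adjEigs_eq_roots_charpoly]
  apply (G.isHermitian_adjMatrix ℝ).exists_ofReal_eq_of_aeval_charpoly
  rw [← G.aeval_charpoly_adjMatrix (R := ℚ), hq, map_mul, hz, zero_mul]

theorem le_two_of_mem_adjEigs_of_ne {lam μ : ℝ} (hlam : lam ∈ adjEigs G) (hlam2 : 2 < lam)
    (hcard : Multiset.card ((adjEigs G).filter (fun μ => 2 < μ)) = 1) (hμ : μ ∈ adjEigs G)
    (hne : μ ≠ lam) : μ ≤ 2 := by
  by_contra! h
  obtain ⟨a, ha⟩ := Multiset.card_eq_one.mp hcard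
  have hlam' : lam ∈ (adjEigs G).filter (fun μ => 2 < μ) := Multiset.mem_filter.mpr ⟨hlam, hlam2⟩
  have hμ' : μ ∈ (adjEigs G).filter (fun μ => 2 < μ) := Multiset.mem_filter.mpr ⟨hμ, h⟩
  rw [ha, Multiset.mem_singleton] at hlam' hμ'
  exact hne (hμ'.trans hlam'.symm)

theorem exists_mem_adjEigs_of_aeval_minpoly_aeval (f : ℤ[X]) {lam : ℝ} (hlam : lam ∈ adjEigs G)
    {w : ℂ} (hw : aeval w (minpoly ℚ ((aeval lam f : ℝ) : ℂ)) = 0) :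
    ∃ μ ∈ adjEigs G, w = aeval μ f := by
  have hlamQ : IsIntegral ℚ (lam : ℂ) := (G.isIntegral_of_mem_adjEigs hlam).algebraMap.tower_top
  have hcast (x : ℝ) : ((aeval x f : ℝ) : ℂ) = aeval (x : ℂ) (f.map (algebraMap ℤ ℚ)) := by
    rw [aeval_map_algebraMap, ← Complex.coe_algebraMap, aeval_algebraMap_apply]
  rw [hcast] at hw
  obtain ⟨z, hz, rfl⟩ := exists_aeval_minpoly_eq_zero_of_aeval_minpoly_aeval hlamQ _ hw
  obtain ⟨μ, hμ, rfl⟩ := G.exists_mem_adjEigs_of_aeval_minpoly hlam hz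
  exact ⟨μ, hμ, (hcast μ).symm⟩

theorem isSalem_of_add_inv_eq_aeval (f : ℤ[X]) {lam t : ℝ} (hlam : lam ∈ adjEigs G)
    (hf : ∀ μ ∈ adjEigs G, aeval μ f ≠ aeval lam f → |aeval μ f| ≤ 2)
    (hℤ : ¬∃ k : ℤ, aeval lam f = k) (ht : 1 < t) (hrel : t + t⁻¹ = aeval lam f) :
    IsSalem t := by
  have hθ : IsIntegral ℤ (aeval lam f) := adjoin_le_integralClosure
    (G.isIntegral_of_mem_adjEigs hlam) (aeval_mem_adjoin_singleton ℤ lam)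
  refine isSalem_of_add_inv_eq hθ hℤ (fun w hw hwθ => ?_) ht hrel
  obtain ⟨μ, hμ, rfl⟩ := G.exists_mem_adjEigs_of_aeval_minpoly_aeval f hlam hw
  exact ⟨_, rfl, hf μ hμ fun h => hwθ (by rw [h])⟩

end SimpleGraph

/-- If `G` is a nontrivial Salem graph, then `τ(G)` is a Salem number. -/
theorem tau_of_nontrivial_salem_graph_is_salem {V : Type} [Fintype V]
    (G : SimpleGraph V) (lam t : ℝ)
    (hG : IsSalemGraph G lam) (hnt : ¬ IsTrivialSalemGraph G lam)
    (ht : IsGraphSalemTau G lam t) : IsSalem t := by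
  obtain ⟨hlam, -, hlam2, hcard, hcase⟩ := hG
  have hle : ∀ μ ∈ adjEigs G, μ ≠ lam → μ ≤ 2 := fun μ =>
    G.le_two_of_mem_adjEigs_of_ne hlam hlam2 hcard
  obtain ⟨ht1, htcase⟩ := ht
  rcases hcase with ⟨hnb, hlow⟩ | ⟨hb, hlow⟩
  · obtain ⟨-, hrel⟩ := htcase.resolve_right fun h => hnb h.1
    refine G.isSalem_of_add_inv_eq_aeval X hlam (fun μ hμ hne => ?_) ?_ ht1 (by simpa using hrel)
    · simp only [aeval_X] at hne ⊢
      exact abs_le.mpr ⟨hlow μ hμ, hle μ hμ hne⟩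
    · simpa using fun k hk => hnt (.inl ⟨hnb, k, hk⟩)
  · obtain ⟨-, hrel⟩ := htcase.resolve_left fun h => h.1 hb
    refine G.isSalem_of_add_inv_eq_aeval (X ^ 2 - 2) hlam (fun μ hμ hne => ?_) ?_ ht1 ?_
    · simp only [map_sub, map_pow, aeval_X, map_ofNat] at hne ⊢
      have hμ2 : |μ| ≤ 2 := abs_le.mpr
        ⟨le_of_not_gt fun h => hne (by rw [hlow μ hμ h]; ring),
          hle μ hμ fun h => hne (by rw [h])⟩
      exact abs_le.mpr ⟨by nlinarith, by nlinarith [sq_abs μ, abs_nonneg μ]⟩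
    · simp only [map_sub, map_pow, aeval_X, map_ofNat]
      rintro ⟨k, hk⟩
      exact hnt (.inr ⟨hb, k + 2, by push_cast; linarith⟩)
    · simp only [map_sub, map_pow, aeval_X, map_ofNat]
      exact add_inv_eq_sq_sub_two_of_sqrt_add_inv_eq (zero_lt_one.trans ht1) hrel
end

section
/- Let G be a bipartite finite simple graph having at least one eigenvalue greater than 2, and suppose there exists a vertex v of G such that the induced subgraph on V(G) − {v} is cyclotomic. Then G is a Salem graph; that is, G has exactly one eigenvalue λ > 2 and its only eigenvalue less than −2 is −λ. -/
/-!
A 2-colouring of `G` gives a `±1` diagonal matrix `D` with `D A D = -A`, so the spectrum of a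
bipartite graph is symmetric about `0` and every eigenvalue below `-2` is the negative of one above
`2`. It therefore suffices that at most one eigenvalue, counted with multiplicity, exceeds `2`.
If two orthonormal eigenvectors had eigenvalues `> 2`, a nonzero combination `x` of them vanishes at
`v` and has `xᵀ A x > 2 xᵀ x`; but restricted to the other vertices, `xᵀ A x` is a quadratic
form of the cyclotomic graph `G - v`, hence at most `2 xᵀ x`.
-/

open Polynomial

open Matrix

namespace OrthonormalBasis

variable {ι n : Type*} [Fintype ι] [Fintype n]
  (b : OrthonormalBasis ι ℝ (EuclideanSpace ℝ n))

theorem dotProduct_eq_ite [DecidableEq ι] (k l : ι) :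
    ⇑(b k) ⬝ᵥ ⇑(b l) = if k = l then 1 else 0 := by
  have := orthonormal_iff_ite.mp b.orthonormal k l
  rwa [EuclideanSpace.inner_eq_star_dotProduct, star_trivial, dotProduct_comm] at this

theorem sum_dotProduct_mul_dotProduct (x y : n → ℝ) :
    ∑ k, (⇑(b k) ⬝ᵥ x) * (⇑(b k) ⬝ᵥ y) = x ⬝ᵥ y := by
  have := b.sum_inner_mul_inner (WithLp.toLp 2 x) (WithLp.toLp 2 y)
  simpa [EuclideanSpace.inner_toLp_toLp, EuclideanSpace.inner_eq_star_dotProduct,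
    dotProduct_comm] using this

end OrthonormalBasis

namespace Matrix.IsHermitian

variable {n : Type*} [Fintype n] [DecidableEq n] {A : Matrix n n ℝ} (hA : A.IsHermitian)

theorem eigenvectorBasis_dotProduct_mulVec (k : n) (x : n → ℝ) :
    ⇑(hA.eigenvectorBasis k) ⬝ᵥ (A *ᵥ x) =
      hA.eigenvalues k * (⇑(hA.eigenvectorBasis k) ⬝ᵥ x) := by
  rw [dotProduct_mulVec, ← mulVec_transpose, ← conjTranspose_eq_transpose_of_trivial, hA.eq,
    hA.mulVec_eigenvectorBasis, smul_dotProduct, smul_eq_mul]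

theorem dotProduct_mulVec_eq_sum (x : n → ℝ) :
    x ⬝ᵥ (A *ᵥ x) =
      ∑ k, hA.eigenvalues k *
        ((⇑(hA.eigenvectorBasis k) ⬝ᵥ x) * (⇑(hA.eigenvectorBasis k) ⬝ᵥ x)) := by
  rw [← hA.eigenvectorBasis.sum_dotProduct_mul_dotProduct]
  simp_rw [hA.eigenvectorBasis_dotProduct_mulVec]
  exact Finset.sum_congr rfl fun k _ => by ring

theorem dotProduct_mulVec_le {c : ℝ} (h : ∀ k, hA.eigenvalues k ≤ c) (x : n → ℝ) :
    x ⬝ᵥ (A *ᵥ x) ≤ c * (x ⬝ᵥ x) := by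
  rw [hA.dotProduct_mulVec_eq_sum, ← hA.eigenvectorBasis.sum_dotProduct_mul_dotProduct,
    Finset.mul_sum]
  exact Finset.sum_le_sum fun k _ => mul_le_mul_of_nonneg_right (h k) (mul_self_nonneg _)

theorem eq_of_lt_eigenvalues {c : ℝ} (v : n)
    (hle : ∀ x : n → ℝ, x v = 0 → x ⬝ᵥ (A *ᵥ x) ≤ c * (x ⬝ᵥ x)) {i j : n}
    (hi : c < hA.eigenvalues i) (hj : c < hA.eigenvalues j) : i = j := by
  by_contra hij
  set u := fun k => ⇑(hA.eigenvectorBasis k)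
  obtain ⟨a, b, hab, hv⟩ :
      ∃ a b : ℝ, (a ≠ 0 ∨ b ≠ 0) ∧ a * u i v + b * u j v = 0 := by
    by_cases h : u i v = 0
    · exact ⟨1, 0, by simp, by simp [h]⟩
    · exact ⟨u j v, -u i v, Or.inr (neg_ne_zero.mpr h), by ring⟩
  set x := a • u i + b • u j
  have hdot : ∀ p q : ℝ, x ⬝ᵥ (p • u i + q • u j) = p * a + q * b := fun p q => by
    simp [x, u, hA.eigenvectorBasis.dotProduct_eq_ite, hij, Ne.symm hij]
  have hAx : A *ᵥ x = (a * hA.eigenvalues i) • u i + (b * hA.eigenvalues j) • u j := by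
    simp only [x, u, mulVec_add, mulVec_smul, hA.mulVec_eigenvectorBasis, smul_smul]
  have hxAx : x ⬝ᵥ (A *ᵥ x) = hA.eigenvalues i * a ^ 2 + hA.eigenvalues j * b ^ 2 := by
    rw [hAx, hdot]
    ring
  have hxx : x ⬝ᵥ x = a ^ 2 + b ^ 2 := by
    rw [hdot]
    ring
  have hpos : 0 < (hA.eigenvalues i - c) * a ^ 2 + (hA.eigenvalues j - c) * b ^ 2 := by
    have hi' := sub_pos.mpr hi
    have hj' := sub_pos.mpr hj
    rcases hab with ha | hb
    · exact add_pos_of_pos_of_nonneg (mul_pos hi' (by positivity)) (by positivity)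
    · exact add_pos_of_nonneg_of_pos (by positivity) (mul_pos hj' (by positivity))
  have := hle x (by simpa [x] using hv)
  rw [hxAx, hxx] at this
  linarith

theorem card_filter_roots_charpoly_le_one (hA : A.IsHermitian) {c : ℝ} (v : n)
    (hle : ∀ x : n → ℝ, x v = 0 → x ⬝ᵥ (A *ᵥ x) ≤ c * (x ⬝ᵥ x)) :
    Multiset.card (A.charpoly.roots.filter (c < ·)) ≤ 1 := by
  rw [hA.roots_charpoly_eq_eigenvalues, RCLike.ofReal_real_eq_id, Function.id_comp,
    Multiset.filter_map, Multiset.card_map, ← Finset.filter_val, ← Finset.card_def]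
  exact Finset.card_le_one.mpr fun i hi j hj =>
    hA.eq_of_lt_eigenvalues v hle (Finset.mem_filter.mp hi).2 (Finset.mem_filter.mp hj).2

end Matrix.IsHermitian

theorem Finset.sum_finset_coe_eq_sum {ι M : Type*} [Fintype ι] [AddCommMonoid M] (s : Finset ι)
    {f : ι → M} (hf : ∀ i ∉ s, f i = 0) : ∑ i : (s : Set ι), f i = ∑ i, f i :=
  (sum_finset_coe f s).trans (sum_subset (subset_univ s) fun i _ hi => hf i hi)

section Restrict

variable {n R : Type*} [Fintype n] [NonUnitalNonAssocSemiring R] {s : Finset n} {x : n → R}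

theorem Matrix.dotProduct_comp_coe (hx : ∀ w ∉ s, x w = 0) (y : n → R) :
    (fun w : (s : Set n) => x w) ⬝ᵥ (fun w : (s : Set n) => y w) = x ⬝ᵥ y :=
  s.sum_finset_coe_eq_sum (f := fun w => x w * y w) fun w hw => by simp [hx w hw]

theorem Matrix.submatrix_coe_mulVec_comp_coe (A : Matrix n n R) (hx : ∀ w ∉ s, x w = 0) :
    A.submatrix Subtype.val Subtype.val *ᵥ (fun w : (s : Set n) => x w) =
      fun w : (s : Set n) => (A *ᵥ x) w :=
  funext fun u =>
    s.sum_finset_coe_eq_sum (f := fun w => A u w * x w) fun w hw => by simp [hx w hw]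

end Restrict

namespace SimpleGraph

variable {V : Type} [Fintype V]

theorem adjEigs_eq (G : SimpleGraph V) [DecidableEq V] [DecidableRel G.Adj] :
    adjEigs G = (G.adjMatrix ℝ).charpoly.roots := by
  unfold adjEigs
  congr!

theorem mem_adjEigs_iff (G : SimpleGraph V) [DecidableEq V] [DecidableRel G.Adj] {μ : ℝ} :
    μ ∈ adjEigs G ↔ μ ∈ spectrum ℝ (G.adjMatrix ℝ) := by
  rw [adjEigs_eq, mem_spectrum_iff_isRoot_charpoly, mem_roots (charpoly_monic _).ne_zero]

theorem Colorable.spectrum_neg_adjMatrix {R : Type*} [CommRing R] [DecidableEq V]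
    {G : SimpleGraph V} [DecidableRel G.Adj] (hG : G.Colorable 2) :
    spectrum R (-G.adjMatrix R) = spectrum R (G.adjMatrix R) := by
  obtain ⟨c⟩ := hG
  set D : Matrix V V R := diagonal fun w => if c w = 0 then 1 else -1
  have hD : D * D = 1 := by
    rw [diagonal_mul_diagonal, ← diagonal_one]
    congr 1
    ext w
    split_ifs <;> simp
  have hDAD : D * G.adjMatrix R * D = -G.adjMatrix R := by
    ext w w'
    rw [mul_diagonal, diagonal_mul, adjMatrix_apply, neg_apply, adjMatrix_apply]
    by_cases h : G.Adj w w'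
    · have hne := c.valid h
      simp only [if_pos h, mul_one]
      split_ifs <;> grind
    · simp [h]
  rw [← hDAD]
  exact spectrum.units_conjugate (u := ⟨D, D, hD, hD⟩)

theorem neg_mem_adjEigs {G : SimpleGraph V} (hG : G.Colorable 2) {μ : ℝ} (h : μ ∈ adjEigs G) :
    -μ ∈ adjEigs G := by
  classical
  rw [mem_adjEigs_iff] at h ⊢
  rw [← hG.spectrum_neg_adjMatrix, ← spectrum.neg_eq]
  simpa using h

theorem card_filter_lt_adjEigs_le_one [DecidableEq V] (G : SimpleGraph V) (v : V) {c : ℝ}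
    (h : ∀ μ ∈ adjEigs (G.induce (({v}ᶜ : Finset V) : Set V)), μ ≤ c) :
    Multiset.card ((adjEigs G).filter (c < ·)) ≤ 1 := by
  classical
  set s : Set V := (({v}ᶜ : Finset V) : Set V)
  have hB := (G.induce s).isHermitian_adjMatrix ℝ
  rw [adjEigs_eq] at h ⊢
  refine (G.isHermitian_adjMatrix ℝ).card_filter_roots_charpoly_le_one v fun x hx => ?_
  have hle := hB.dotProduct_mulVec_le (fun k => h _ ?_) fun w : s => x w
  · have hsub : (G.induce s).adjMatrix ℝ = (G.adjMatrix ℝ).submatrix Subtype.val Subtype.val :=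
      (Embedding.submatrix_adjMatrix ℝ (Embedding.induce s)).symm
    have hx' : ∀ w ∉ ({v}ᶜ : Finset V), x w = 0 := fun w hw => by
      rwa [Finset.mem_singleton.mp (Finset.notMem_compl.mp hw)]
    rwa [hsub, submatrix_coe_mulVec_comp_coe _ hx', dotProduct_comp_coe hx',
      dotProduct_comp_coe hx'] at hle
  · rw [hB.roots_charpoly_eq_eigenvalues]
    exact Multiset.mem_map_of_mem _ (Finset.mem_univ_val k)

end SimpleGraph

/-- A bipartite graph with an eigenvalue greater than 2, all of whose eigenvalues after
deleting some vertex `v` lie in `[-2,2]`, is a Salem graph: it has exactly one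
eigenvalue `lam > 2` and its only eigenvalue less than `-2` is `-lam`. -/
theorem bipartite_one_vertex_deleted_salem {n : ℕ} (G : SimpleGraph (Fin n))
    (hbip : G.Colorable 2) (hbig : ∃ μ ∈ adjEigs G, 2 < μ) (v : Fin n)
    (hcyc : ∀ μ ∈ adjEigs (G.induce ((({v}ᶜ : Finset (Fin n)) : Set (Fin n)))),
      -2 ≤ μ ∧ μ ≤ 2) :
    ∃ lam ∈ adjEigs G, 2 < lam ∧
      Multiset.card ((adjEigs G).filter (fun μ => 2 < μ)) = 1 ∧
      ∀ μ ∈ adjEigs G, μ < -2 → μ = -lam := by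
  obtain ⟨lam, hlam, hlam2⟩ := hbig
  have hlam_mem : lam ∈ (adjEigs G).filter (2 < ·) := Multiset.mem_filter.mpr ⟨hlam, hlam2⟩
  have hcard : Multiset.card ((adjEigs G).filter (2 < ·)) = 1 :=
    le_antisymm (G.card_filter_lt_adjEigs_le_one v fun μ hμ => (hcyc μ hμ).2)
      (Multiset.card_pos_iff_exists_mem.mpr ⟨lam, hlam_mem⟩)
  obtain ⟨a, ha⟩ := Multiset.card_eq_one.mp hcard
  refine ⟨lam, hlam, hlam2, hcard, fun μ hμ hμ2 => ?_⟩
  have hneg_mem : -μ ∈ (adjEigs G).filter (2 < ·) :=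
    Multiset.mem_filter.mpr ⟨SimpleGraph.neg_mem_adjEigs hbip hμ, by linarith⟩
  rw [ha, Multiset.mem_singleton] at hlam_mem hneg_mem
  linarith
end

section
/- Let G be a nonbipartite finite simple graph that has at least one eigenvalue greater than 2, that is (isomorphic to) the line graph of some finite simple graph, and that contains a vertex v such that the induced subgraph on V(G) − {v} is cyclotomic. Then G is a Salem graph; that is, G has exactly one eigenvalue greater than 2 and no eigenvalue less than −2. -/
open Polynomial

/-!
If `G ≃ L(H)` and `N` is the vertex-edge incidence matrix of `H`, then `NᵀN = A(G) + 2I`, so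
`A(G) + 2I` is positive semidefinite and no eigenvalue of `G` is below `-2`. If two eigenvalues
exceeded `2`, some nonzero combination of two orthonormal eigenvectors for them would vanish at
`v`; its Rayleigh quotient exceeds `2`, yet it is also a Rayleigh quotient of `G - v`, whose
eigenvalues are at most `2`. Together with the eigenvalue `> 2` granted by hypothesis, this leaves
exactly one.
-/

open Matrix

theorem Fintype.sum_subtype_eq_sum {ι M : Type*} [Fintype ι] [AddCommMonoid M] {p : ι → Prop}
    [Fintype (Subtype p)] {f : ι → M} (hf : ∀ i, ¬ p i → f i = 0) :
    ∑ a : Subtype p, f a = ∑ i, f i := by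
  classical
  rw [← Finset.sum_subtype (Finset.univ.filter p) (by simp), Finset.sum_filter_of_ne]
  exact fun i _ hi => by_contra fun h => hi (hf i h)

namespace Matrix

variable {n : Type*} [Fintype n] {R : Type*} [CommSemiring R] {p : n → Prop} [Fintype (Subtype p)]

theorem dotProduct_subtype_eq {x : n → R} (y : n → R) (hx : ∀ i, ¬ p i → x i = 0) :
    (fun a : Subtype p => x a) ⬝ᵥ (fun a : Subtype p => y a) = x ⬝ᵥ y :=
  Fintype.sum_subtype_eq_sum (f := fun i => x i * y i) fun i hi => by simp [hx i hi]

theorem dotProduct_submatrix_mulVec_subtype (A : Matrix n n R) {x : n → R}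
    (hx : ∀ i, ¬ p i → x i = 0) :
    (fun a : Subtype p => x a) ⬝ᵥ
        (A.submatrix Subtype.val Subtype.val *ᵥ fun a : Subtype p => x a) =
      x ⬝ᵥ (A *ᵥ x) := by
  have hmulVec : (A.submatrix Subtype.val Subtype.val *ᵥ fun a : Subtype p => x a) =
      fun a : Subtype p => (A *ᵥ x) a :=
    funext fun a => by
      change (fun j : Subtype p => A a j) ⬝ᵥ (fun j : Subtype p => x j) = A a ⬝ᵥ x
      rw [dotProduct_comm, dotProduct_subtype_eq _ hx, dotProduct_comm]
  rw [hmulVec, dotProduct_subtype_eq _ hx]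

variable [DecidableEq n] {A : Matrix n n ℝ}

theorem IsHermitian.roots_charpoly_eq_map_eigenvalues (hA : A.IsHermitian) :
    A.charpoly.roots = Finset.univ.val.map hA.eigenvalues := by
  simpa using hA.roots_charpoly_eq_eigenvalues

theorem IsHermitian.posSemidef_sub_smul_one_iff (hA : A.IsHermitian) (c : ℝ) :
    (A - c • 1).PosSemidef ↔ ∀ μ ∈ spectrum ℝ A, c ≤ μ := by
  rw [posSemidef_iff_isHermitian_and_spectrum_nonneg,
    and_iff_right (hA.sub (isHermitian_one.smul (.all c))), ← Algebra.algebraMap_eq_smul_one,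
    ← spectrum.sub_singleton_eq]
  simp [Set.subset_def]

theorem IsHermitian.posSemidef_smul_one_sub_iff (hA : A.IsHermitian) (c : ℝ) :
    (c • 1 - A).PosSemidef ↔ ∀ μ ∈ spectrum ℝ A, μ ≤ c := by
  rw [posSemidef_iff_isHermitian_and_spectrum_nonneg,
    and_iff_right ((isHermitian_one.smul (.all c)).sub hA), ← Algebra.algebraMap_eq_smul_one,
    ← spectrum.singleton_sub_eq]
  simp [Set.subset_def]

theorem IsHermitian.dotProduct_mulVec_le_s8 (hA : A.IsHermitian) {c : ℝ}
    (hc : ∀ μ ∈ spectrum ℝ A, μ ≤ c) (x : n → ℝ) : x ⬝ᵥ (A *ᵥ x) ≤ c * (x ⬝ᵥ x) := by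
  have := ((hA.posSemidef_smul_one_sub_iff c).2 hc).dotProduct_mulVec_nonneg x
  simpa [sub_mulVec, dotProduct_sub, smul_mulVec] using this

theorem IsHermitian.dotProduct_eigenvectorBasis (hA : A.IsHermitian) (i j : n) :
    ⇑(hA.eigenvectorBasis i) ⬝ᵥ ⇑(hA.eigenvectorBasis j) = if i = j then 1 else 0 := by
  have := orthonormal_iff_ite.1 hA.eigenvectorBasis.orthonormal i j
  simpa [EuclideanSpace.inner_eq_star_dotProduct, dotProduct_comm] using this

theorem IsHermitian.dotProduct_mulVec_eigenvector_combination (hA : A.IsHermitian) {i j : n}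
    (hij : i ≠ j) (p q c : ℝ) :
    let x := p • ⇑(hA.eigenvectorBasis i) + q • ⇑(hA.eigenvectorBasis j)
    x ⬝ᵥ (A *ᵥ x) - c * (x ⬝ᵥ x) =
      p ^ 2 * (hA.eigenvalues i - c) + q ^ 2 * (hA.eigenvalues j - c) := by
  simp only [mulVec_add, mulVec_smul, mulVec_eigenvectorBasis, dotProduct_add, add_dotProduct,
    smul_dotProduct, dotProduct_smul, dotProduct_eigenvectorBasis, hij, hij.symm, if_true,
    if_false, smul_eq_mul]
  ring

theorem IsHermitian.exists_apply_eq_zero_lt_dotProduct_mulVec (hA : A.IsHermitian) {i j : n}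
    (hij : i ≠ j) {c : ℝ} (hi : c < hA.eigenvalues i) (hj : c < hA.eigenvalues j) (v : n) :
    ∃ x : n → ℝ, x v = 0 ∧ c * (x ⬝ᵥ x) < x ⬝ᵥ (A *ᵥ x) := by
  set b := fun k => ⇑(hA.eigenvectorBasis k)
  by_cases hv : b i v = 0
  · refine ⟨(1 : ℝ) • b i + (0 : ℝ) • b j, by simp [hv], ?_⟩
    have := hA.dotProduct_mulVec_eigenvector_combination hij 1 0 c
    simp only at this
    linarith
  · refine ⟨b j v • b i + (-b i v) • b j, by simp; ring, ?_⟩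
    have := hA.dotProduct_mulVec_eigenvector_combination hij (b j v) (-b i v) c
    have : 0 < b i v ^ 2 := by positivity
    nlinarith [sq_nonneg (b j v)]

end Matrix

namespace SimpleGraph

theorem adjMatrix_induce {R V : Type*} [Zero R] [One R] (G : SimpleGraph V) [DecidableRel G.Adj]
    (s : Set V) : (G.induce s).adjMatrix R = (G.adjMatrix R).submatrix Subtype.val Subtype.val :=
  ((Embedding.induce s).submatrix_adjMatrix R).symm

variable {V : Type*} [Fintype V] [DecidableEq V] (H : SimpleGraph V) [DecidableRel H.Adj]

theorem sum_incMatrix_mul_incMatrix_of_ne {e f : H.edgeSet} (hef : e ≠ f) :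
    ∑ w, H.incMatrix ℝ w e * H.incMatrix ℝ w f =
      if ∃ w, w ∈ (e : Sym2 V) ∧ w ∈ (f : Sym2 V) then 1 else 0 := by
  simp only [incMatrix_apply', edge_mem_incidenceSet_iff, ite_zero_mul_ite_zero, one_mul]
  split_ifs with h
  · obtain ⟨w, hwe, hwf⟩ := h
    rw [Finset.sum_eq_single w (fun u _ hu => if_neg fun hu' =>
      hef (Subtype.ext (Sym2.eq_of_ne_mem hu hu'.1 hwe hu'.2 hwf))) (by simp), if_pos ⟨hwe, hwf⟩]
  · exact Finset.sum_eq_zero fun w _ => if_neg fun hw => h ⟨w, hw⟩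

theorem transpose_mul_incMatrix_edgeSet [DecidableRel H.lineGraph.Adj] :
    ((H.incMatrix ℝ).submatrix id (↑))ᵀ *
        (H.incMatrix ℝ).submatrix id ((↑) : H.edgeSet → Sym2 V) =
      H.lineGraph.adjMatrix ℝ + (2 : ℝ) • 1 := by
  ext e f
  by_cases hef : e = f
  · subst hef
    have := H.incMatrix_transpose_mul_diag (R := ℝ) (e := e)
    simpa [Matrix.mul_apply] using this
  · rw [Matrix.mul_apply]
    simpa [hef, lineGraph_adj_iff_exists] using H.sum_incMatrix_mul_incMatrix_of_ne hef

theorem posSemidef_lineGraph_adjMatrix_add_two [DecidableRel H.lineGraph.Adj] :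
    (H.lineGraph.adjMatrix ℝ + (2 : ℝ) • 1).PosSemidef := by
  rw [← transpose_mul_incMatrix_edgeSet]
  exact posSemidef_conjTranspose_mul_self _

variable {H} in
theorem Iso.posSemidef_adjMatrix_add_two_of_lineGraph {W : Type*} [Fintype W] [DecidableEq W]
    {G : SimpleGraph W} [DecidableRel G.Adj] [DecidableRel H.lineGraph.Adj]
    (e : G ≃g H.lineGraph) : (G.adjMatrix ℝ + (2 : ℝ) • 1).PosSemidef := by
  convert H.posSemidef_lineGraph_adjMatrix_add_two.submatrix e using 1
  ext i j
  simp [one_apply, e.map_adj_iff]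

variable {H} in
theorem Iso.neg_two_le_of_mem_spectrum_of_lineGraph {W : Type*} [Fintype W] [DecidableEq W]
    {G : SimpleGraph W} [DecidableRel G.Adj] [DecidableRel H.lineGraph.Adj]
    (e : G ≃g H.lineGraph) {μ : ℝ} (hμ : μ ∈ spectrum ℝ (G.adjMatrix ℝ)) : -2 ≤ μ := by
  refine (IsHermitian.posSemidef_sub_smul_one_iff (G.isHermitian_adjMatrix ℝ) (-2)).1 ?_ μ hμ
  simpa [sub_eq_add_neg] using e.posSemidef_adjMatrix_add_two_of_lineGraph

variable (G : SimpleGraph V) [DecidableRel G.Adj]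

theorem eq_of_lt_eigenvalues_of_induce_compl_singleton (v : V) {c : ℝ}
    (hc : ∀ μ ∈ spectrum ℝ ((G.induce (({v}ᶜ : Finset V) : Set V)).adjMatrix ℝ), μ ≤ c)
    {i j : V} (hi : c < (G.isHermitian_adjMatrix ℝ).eigenvalues i)
    (hj : c < (G.isHermitian_adjMatrix ℝ).eigenvalues j) : i = j := by
  by_contra hij
  obtain ⟨x, hxv, hx⟩ :=
    IsHermitian.exists_apply_eq_zero_lt_dotProduct_mulVec _ hij hi hj v
  have hx_off : ∀ k, k ∉ (({v}ᶜ : Finset V) : Set V) → x k = 0 := by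
    simp_all
  have hle := IsHermitian.dotProduct_mulVec_le_s8 ((G.induce _).isHermitian_adjMatrix ℝ) hc
    (fun a => x a)
  rw [adjMatrix_induce, dotProduct_submatrix_mulVec_subtype _ hx_off,
    dotProduct_subtype_eq _ hx_off] at hle
  linarith

end SimpleGraph

theorem adjEigs_eq_map_eigenvalues {V : Type} [Fintype V] [DecidableEq V] (G : SimpleGraph V)
    [DecidableRel G.Adj] :
    adjEigs G = Finset.univ.val.map (G.isHermitian_adjMatrix ℝ).eigenvalues := by
  rw [← IsHermitian.roots_charpoly_eq_map_eigenvalues, adjEigs]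
  congr!

theorem mem_adjEigs_iff {V : Type} [Fintype V] [DecidableEq V] (G : SimpleGraph V)
    [DecidableRel G.Adj] {μ : ℝ} : μ ∈ adjEigs G ↔ μ ∈ spectrum ℝ (G.adjMatrix ℝ) := by
  rw [adjEigs_eq_map_eigenvalues, (G.isHermitian_adjMatrix ℝ).spectrum_real_eq_range_eigenvalues]
  simp

theorem nonbipartite_line_graph_salem_general {n : ℕ} (G : SimpleGraph (Fin n))
    (hbig : ∃ μ ∈ adjEigs G, 2 < μ)
    (hline : ∃ (m : ℕ) (H : SimpleGraph (Fin m)), Nonempty (G ≃g H.lineGraph))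
    (v : Fin n)
    (hcyc : ∀ μ ∈ adjEigs (G.induce ((({v}ᶜ : Finset (Fin n)) : Set (Fin n)))),
      -2 ≤ μ ∧ μ ≤ 2) :
    Multiset.card ((adjEigs G).filter (fun μ => 2 < μ)) = 1 ∧
    ∀ μ ∈ adjEigs G, -2 ≤ μ := by
  classical
  obtain ⟨m, H, ⟨e⟩⟩ := hline
  have hunique : ∀ i j, 2 < (G.isHermitian_adjMatrix ℝ).eigenvalues i →
      2 < (G.isHermitian_adjMatrix ℝ).eigenvalues j → i = j :=
    fun i j => G.eq_of_lt_eigenvalues_of_induce_compl_singleton v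
      fun μ hμ => (hcyc μ ((mem_adjEigs_iff _).2 hμ)).2
  refine ⟨?_, fun μ hμ => e.neg_two_le_of_mem_spectrum_of_lineGraph ((mem_adjEigs_iff G).1 hμ)⟩
  obtain ⟨_, hμ, hi⟩ := hbig
  obtain ⟨i, -, rfl⟩ := Multiset.mem_map.1 ((adjEigs_eq_map_eigenvalues G) ▸ hμ)
  rw [adjEigs_eq_map_eigenvalues, Multiset.filter_map, Multiset.card_map]
  exact Finset.card_eq_one.2 ⟨i, Finset.eq_singleton_iff_unique_mem.2
    ⟨Finset.mem_filter.2 ⟨Finset.mem_univ i, hi⟩,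
      fun j hj => hunique j i (Finset.mem_filter.1 hj).2 hi⟩⟩

/-- A nonbipartite line graph with an eigenvalue greater than 2, all of whose eigenvalues
after deleting some vertex `v` lie in `[-2,2]`, is a Salem graph: it has exactly one
eigenvalue greater than 2 and no eigenvalue less than `-2`. -/
theorem nonbipartite_line_graph_salem {n : ℕ} (G : SimpleGraph (Fin n))
    (hnonbip : ¬ G.Colorable 2) (hbig : ∃ μ ∈ adjEigs G, 2 < μ)
    (hline : ∃ (m : ℕ) (H : SimpleGraph (Fin m)), Nonempty (G ≃g H.lineGraph))
    (v : Fin n)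
    (hcyc : ∀ μ ∈ adjEigs (G.induce ((({v}ᶜ : Finset (Fin n)) : Set (Fin n)))),
      -2 ≤ μ ∧ μ ≤ 2) :
    Multiset.card ((adjEigs G).filter (fun μ => 2 < μ)) = 1 ∧
    ∀ μ ∈ adjEigs G, -2 ≤ μ :=
  nonbipartite_line_graph_salem_general G hbig hline v hcyc
end

section
/- Let T₁ and T₂ be rooted trees. Then the reciprocal polynomials satisfy R_{T₁+T₂}(z) = R_{T₁}(z)·R_{T₂}(z) − z·R_{T₁'}(z)·R_{T₂'}(z). -/
/-- The integer polynomial `z^n · χ_G(z + 1/z)`, where `χ_G` is the characteristic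
polynomial of the adjacency matrix of `G` and `n` is the number of vertices:
written out as `∑ₖ aₖ z^(n-k) (z²+1)^k` where `χ_G = ∑ₖ aₖ zᵏ`. -/
noncomputable def recipQ {V : Type} [Fintype V] (G : SimpleGraph V) : Polynomial ℤ :=
  letI := Classical.decEq V
  letI := Classical.decRel G.Adj
  ∑ k ∈ Finset.range (Fintype.card V + 1),
    Polynomial.C (((SimpleGraph.adjMatrix ℤ G).charpoly).coeff k) *
      Polynomial.X ^ (Fintype.card V - k) * (Polynomial.X ^ 2 + 1) ^ k
/-- Adjacency relation for the rooted sum `T₁ + T₂`: the disjoint union of `G₁` and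
`G₂` with a new edge joining the root `r₁` of `G₁` to the root `r₂` of `G₂`. -/
def joinAdj {n₁ n₂ : ℕ} (G₁ : SimpleGraph (Fin n₁)) (r₁ : Fin n₁)
    (G₂ : SimpleGraph (Fin n₂)) (r₂ : Fin n₂) :
    (Fin n₁ ⊕ Fin n₂) → (Fin n₁ ⊕ Fin n₂) → Prop
  | Sum.inl a, Sum.inl b => G₁.Adj a b
  | Sum.inl a, Sum.inr b => a = r₁ ∧ b = r₂
  | Sum.inr a, Sum.inl b => a = r₂ ∧ b = r₁
  | Sum.inr a, Sum.inr b => G₂.Adj a b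

/-- The rooted sum `T₁ + T₂` of two rooted graphs: join the two roots by a new edge. -/
def joinRooted {n₁ n₂ : ℕ} (G₁ : SimpleGraph (Fin n₁)) (r₁ : Fin n₁)
    (G₂ : SimpleGraph (Fin n₂)) (r₂ : Fin n₂) : SimpleGraph (Fin n₁ ⊕ Fin n₂) where
  Adj := joinAdj G₁ r₁ G₂ r₂
  symm := by
    constructor
    rintro (a | a) (b | b) h <;> simp only [joinAdj] at h ⊢
    · exact G₁.adj_symm h
    · exact ⟨h.2, h.1⟩
    · exact ⟨h.2, h.1⟩
    · exact G₂.adj_symm h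
  loopless := by
    constructor
    rintro (a | a) h <;> simp only [joinAdj] at h
    · exact G₁.irrefl h
    · exact G₂.irrefl h

/-! Joining the roots by an edge adds the entries `-1` at `(r₁, r₂)` and `(r₂, r₁)` to the
block-diagonal matrix `xI - A₁ ⊕ xI - A₂`. Expanding the determinant along these two rows, the
only surviving term besides `χ_{T₁} χ_{T₂}` uses both new entries and equals minus the product of
the diagonal cofactors at the roots, i.e. `χ_{T₁'} χ_{T₂'}`.
Mapped to Laurent polynomials, `recipQ G` is `T^|G| · χ_G(T + T⁻¹)`, so the identity becomes
`R_{T₁+T₂}(z²) = R_{T₁}(z²) R_{T₂}(z²) - z² R_{T₁'}(z²) R_{T₂'}(z²)`, and `p ↦ p(z²)` is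
injective. -/

open Matrix Polynomial SimpleGraph

namespace Matrix

variable {m n : Type*} [DecidableEq m] [DecidableEq n]

theorem fromBlocks_updateRow_inl {α : Type*} (A : Matrix m m α) (B : Matrix m n α)
    (C : Matrix n m α) (D : Matrix n n α) (i : m) (r : m → α) (s : n → α) :
    (fromBlocks A B C D).updateRow (Sum.inl i) (Sum.elim r s) =
      fromBlocks (A.updateRow i r) (B.updateRow i s) C D := by
  ext (k | k) (l | l) <;> simp [updateRow_apply]

theorem fromBlocks_updateRow_inr {α : Type*} (A : Matrix m m α) (B : Matrix m n α)
    (C : Matrix n m α) (D : Matrix n n α) (j : n) (r : m → α) (s : n → α) :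
    (fromBlocks A B C D).updateRow (Sum.inr j) (Sum.elim r s) =
      fromBlocks A B (C.updateRow j r) (D.updateRow j s) := by
  ext (k | k) (l | l) <;> simp [updateRow_apply]

theorem updateRow_single_self_zero {α : Type*} [Zero α] (i : m) (j : n) (a : α) :
    (single i j a).updateRow i 0 = 0 := by
  rw [single_eq_updateRow_zero, updateRow_idem, updateRow_zero_zero]

variable [Fintype m] [Fintype n] {R : Type*} [CommRing R]

theorem det_fromBlocks_eq_add_updateRow_inl (A : Matrix m m R) (B : Matrix m n R)
    (C : Matrix n m R) (D : Matrix n n R) (i : m) :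
    (fromBlocks A B C D).det =
      (fromBlocks A (B.updateRow i 0) C D).det + (fromBlocks (A.updateRow i 0) B C D).det := by
  have hrow : fromBlocks A B C D (Sum.inl i) = Sum.elim (A i) 0 + Sum.elim (0 : m → R) (B i) := by
    ext (l | l) <;> simp
  conv_lhs => rw [← updateRow_eq_self (fromBlocks A B C D) (Sum.inl i), hrow]
  rw [det_updateRow_add, fromBlocks_updateRow_inl, fromBlocks_updateRow_inl, updateRow_eq_self,
    updateRow_eq_self]

theorem det_fromBlocks_eq_add_updateRow_inr (A : Matrix m m R) (B : Matrix m n R)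
    (C : Matrix n m R) (D : Matrix n n R) (j : n) :
    (fromBlocks A B C D).det =
      (fromBlocks A B (C.updateRow j 0) D).det + (fromBlocks A B C (D.updateRow j 0)).det := by
  have hrow : fromBlocks A B C D (Sum.inr j) = Sum.elim (0 : m → R) (D j) + Sum.elim (C j) 0 := by
    ext (l | l) <;> simp
  conv_lhs => rw [← updateRow_eq_self (fromBlocks A B C D) (Sum.inr j), hrow]
  rw [det_updateRow_add, fromBlocks_updateRow_inr, fromBlocks_updateRow_inr, updateRow_eq_self,
    updateRow_eq_self]

theorem det_fromBlocks_updateRow_zero_single_single (A : Matrix m m R) (D : Matrix n n R)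
    (i : m) (j : n) (b c : R) :
    (fromBlocks (A.updateRow i 0) (single i j b) (single j i c) (D.updateRow j 0)).det =
      -(b * c * adjugate A i i * adjugate D j j) := by
  set M := fromBlocks (A.updateRow i 0) (single i j b) (single j i c) (D.updateRow j 0)
  have hswap : M.submatrix (Equiv.swap (Sum.inl i) (Sum.inr j)) id =
      fromBlocks (A.updateRow i (c • Pi.single i 1)) 0 0 (D.updateRow j (b • Pi.single j 1)) := by
    ext (k | k) (l | l) <;>
      simp only [M, submatrix_apply, Equiv.swap_apply_def, id, Sum.inl.injEq, Sum.inr.injEq,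
        reduceCtorEq, if_false] <;>
      split_ifs <;> simp_all [single_apply, updateRow_apply, Pi.single_apply, eq_comm]
  have hdet := det_permute (Equiv.swap (Sum.inl i) (Sum.inr j)) M
  rw [hswap, det_fromBlocks_zero₂₁, det_updateRow_smul, det_updateRow_smul,
    Equiv.Perm.sign_swap (by simp)] at hdet
  simp only [Units.val_neg, Units.val_one, Int.cast_neg, Int.cast_one] at hdet
  rw [adjugate_apply, adjugate_apply]
  linear_combination hdet

theorem det_fromBlocks_single_single (A : Matrix m m R) (D : Matrix n n R) (i : m) (j : n)
    (b c : R) :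
    (fromBlocks A (single i j b) (single j i c) D).det =
      A.det * D.det - b * c * adjugate A i i * adjugate D j j := by
  rw [det_fromBlocks_eq_add_updateRow_inl _ _ _ _ i, updateRow_single_self_zero,
    det_fromBlocks_zero₁₂, det_fromBlocks_eq_add_updateRow_inr _ _ _ _ j,
    updateRow_single_self_zero, det_fromBlocks_zero₂₁,
    det_fromBlocks_updateRow_zero_single_single,
    det_eq_zero_of_row_eq_zero (A := A.updateRow i 0) i (by simp)]
  ring

theorem adjugate_charmatrix_apply_self (A : Matrix n n R) (i : n) :
    adjugate (charmatrix A) i i =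
      (A.submatrix ((↑) : ((({i}ᶜ : Finset n) : Set n)) → n) (↑)).charpoly := by
  have hrows : (charmatrix A).updateRow i (Pi.single i 1) =
      of (({i}ᶜ : Finset n).piecewise (charmatrix A).row (1 : Matrix n n R[X]).row) := by
    ext k l
    by_cases h : k = i <;> simp [h, updateRow_apply, one_apply, Pi.single_apply, eq_comm]
  have hsub : (charmatrix A).submatrix ((↑) : ({i}ᶜ : Finset n) → n) (↑) =
      charmatrix (A.submatrix (↑) (↑)) := by
    ext k l
    by_cases h : k = l <;> simp [h]
  rw [adjugate_apply, hrows, det_piecewise_one_eq_submatrix_det, hsub]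
  -- the index types `↥({i}ᶜ : Finset n)` and `↥(↑{i}ᶜ : Set n)` are defeq, with their instances
  rfl

end Matrix

theorem SimpleGraph.adjMatrix_induce_s12 {R V : Type*} [Zero R] [One R] (G : SimpleGraph V)
    [DecidableRel G.Adj] (s : Set V) [DecidableRel (G.induce s).Adj] :
    adjMatrix R (G.induce s) = (adjMatrix R G).submatrix (↑) (↑) := by
  ext a b
  simp [adjMatrix_apply]

section joinRooted

variable {n₁ n₂ : ℕ} (G₁ : SimpleGraph (Fin n₁)) (r₁ : Fin n₁) (G₂ : SimpleGraph (Fin n₂))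
  (r₂ : Fin n₂) [DecidableRel G₁.Adj] [DecidableRel G₂.Adj]
  [DecidableRel (joinRooted G₁ r₁ G₂ r₂).Adj]

theorem adjMatrix_joinRooted (R : Type*) [Semiring R] :
    adjMatrix R (joinRooted G₁ r₁ G₂ r₂) =
      fromBlocks (adjMatrix R G₁) (single r₁ r₂ 1) (single r₂ r₁ 1) (adjMatrix R G₂) := by
  have hadj : (joinRooted G₁ r₁ G₂ r₂).Adj = joinAdj G₁ r₁ G₂ r₂ := rfl
  ext (a | a) (b | b) <;> simp [adjMatrix_apply, single_apply, hadj, joinAdj, eq_comm]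

theorem charpoly_adjMatrix_joinRooted (R : Type*) [CommRing R]
    [DecidableRel (G₁.induce ((({r₁}ᶜ : Finset (Fin n₁)) : Set (Fin n₁)))).Adj]
    [DecidableRel (G₂.induce ((({r₂}ᶜ : Finset (Fin n₂)) : Set (Fin n₂)))).Adj] :
    (adjMatrix R (joinRooted G₁ r₁ G₂ r₂)).charpoly =
      (adjMatrix R G₁).charpoly * (adjMatrix R G₂).charpoly -
        (adjMatrix R (G₁.induce ((({r₁}ᶜ : Finset (Fin n₁)) : Set (Fin n₁))))).charpoly *
          (adjMatrix R (G₂.induce ((({r₂}ᶜ : Finset (Fin n₂)) : Set (Fin n₂))))).charpoly := by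
  have hsingle {a b : Type} [DecidableEq a] [DecidableEq b] (i : a) (j : b) :
      -(single i j (1 : R)).map C = single i j (-1) := by
    rw [map_single, map_one, ← neg_one_smul R[X], smul_single, smul_eq_mul, mul_one]
  rw [charpoly, adjMatrix_joinRooted, charmatrix_fromBlocks, hsingle, hsingle,
    det_fromBlocks_single_single, adjugate_charmatrix_apply_self, adjugate_charmatrix_apply_self,
    adjMatrix_induce_s12, adjMatrix_induce_s12]
  simp only [charpoly]
  ring

end joinRooted

section recipQ

open LaurentPolynomial

theorem LaurentPolynomial.T_mul_T_add_T_neg_one_pow {R : Type*} [CommSemiring R] {N k : ℕ}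
    (hk : k ≤ N) :
    (T N : R[T;T⁻¹]) * (T 1 + T (-1)) ^ k = T (N - k : ℕ) * (T 2 + 1) ^ k := by
  have h : (T 2 + 1 : R[T;T⁻¹]) = T 1 * (T 1 + T (-1)) := by
    rw [mul_add, ← T_add, ← T_add]; norm_num [T_zero]
  rw [h, mul_pow, T_pow, ← mul_assoc, ← T_add]
  congr 2
  push_cast [hk]; ring

theorem toLaurent_recipQ {V : Type} [Fintype V] [DecidableEq V] (G : SimpleGraph V)
    [DecidableRel G.Adj] :
    toLaurent (recipQ G) =
      T (Fintype.card V) * aeval (T 1 + T (-1) : ℤ[T;T⁻¹]) (adjMatrix ℤ G).charpoly := by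
  have hdeg : (adjMatrix ℤ G).charpoly.natDegree = Fintype.card V :=
    charpoly_natDegree_eq_dim _
  obtain rfl : ‹DecidableRel G.Adj› = Classical.decRel G.Adj := Subsingleton.elim _ _
  obtain rfl : ‹DecidableEq V› = Classical.decEq V := Subsingleton.elim _ _
  rw [aeval_eq_sum_range, hdeg, Finset.mul_sum, recipQ, map_sum]
  refine Finset.sum_congr rfl fun k hk => ?_
  rw [mul_smul_comm, T_mul_T_add_T_neg_one_pow (Nat.lt_succ_iff.mp (Finset.mem_range.mp hk))]
  simp [LaurentPolynomial.smul_eq_C_mul, mul_assoc]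

theorem Fintype.card_coe_compl_singleton {α : Type*} [Fintype α] [DecidableEq α] (a : α) :
    Fintype.card ((({a}ᶜ : Finset α) : Set α)) = Fintype.card α - 1 := by
  simp only [Finset.coe_sort_coe, Fintype.card_coe, Finset.card_compl, Finset.card_singleton]

theorem recipQ_joinRooted {n₁ n₂ : ℕ} (G₁ : SimpleGraph (Fin n₁)) (r₁ : Fin n₁)
    (G₂ : SimpleGraph (Fin n₂)) (r₂ : Fin n₂) :
    recipQ (joinRooted G₁ r₁ G₂ r₂) =
      recipQ G₁ * recipQ G₂ -
        X ^ 2 * recipQ (G₁.induce ((({r₁}ᶜ : Finset (Fin n₁)) : Set (Fin n₁)))) *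
          recipQ (G₂.induce ((({r₂}ᶜ : Finset (Fin n₂)) : Set (Fin n₂)))) := by
  classical
  have hT {n : ℕ} (r : Fin n) : (T n : ℤ[T;T⁻¹]) = T 1 * T (n - 1 : ℕ) := by
    rw [← T_add]; congr 1; have := r.pos; omega
  apply toLaurent_injective
  simp only [map_sub, map_mul, toLaurent_X_pow, toLaurent_recipQ, charpoly_adjMatrix_joinRooted,
    Fintype.card_coe_compl_singleton, Fintype.card_sum, Fintype.card_fin, Nat.cast_add, T_add]
  rw [hT r₁, hT r₂, show ((2 : ℕ) : ℤ) = 1 + 1 from rfl, T_add]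
  ring

end recipQ

theorem recip_of_rooted_sum_general {n₁ n₂ : ℕ} (G₁ : SimpleGraph (Fin n₁))
    (G₂ : SimpleGraph (Fin n₂))
    (r₁ : Fin n₁) (r₂ : Fin n₂)
    (R₁ R₂ R₁' R₂' R₁₂ : Polynomial ℤ)
    (hR₁ : R₁.comp (Polynomial.X ^ 2) = recipQ G₁)
    (hR₂ : R₂.comp (Polynomial.X ^ 2) = recipQ G₂)
    (hR₁' : R₁'.comp (Polynomial.X ^ 2) =
      recipQ (G₁.induce ((({r₁}ᶜ : Finset (Fin n₁)) : Set (Fin n₁)))))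
    (hR₂' : R₂'.comp (Polynomial.X ^ 2) =
      recipQ (G₂.induce ((({r₂}ᶜ : Finset (Fin n₂)) : Set (Fin n₂)))))
    (hR₁₂ : R₁₂.comp (Polynomial.X ^ 2) = recipQ (joinRooted G₁ r₁ G₂ r₂)) :
    R₁₂ = R₁ * R₂ - Polynomial.X * R₁' * R₂' := by
  apply expand_injective two_pos
  simp only [expand_eq_comp_X_pow, sub_comp, mul_comp, X_comp, hR₁, hR₂, hR₁', hR₂', hR₁₂]
  exact recipQ_joinRooted G₁ r₁ G₂ r₂

/-- For rooted trees `T₁`, `T₂`, the reciprocal polynomials satisfy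
`R_{T₁+T₂} = R_{T₁}·R_{T₂} − z·R_{T₁'}·R_{T₂'}`, where `Tᵢ'` is the forest obtained by
deleting the root of `Tᵢ`.  The reciprocal polynomial `R` of a (bipartite) graph on `N`
vertices is characterised by `R(z²) = z^N χ(z+1/z)`. -/
theorem recip_of_rooted_sum {n₁ n₂ : ℕ} (G₁ : SimpleGraph (Fin n₁))
    (G₂ : SimpleGraph (Fin n₂)) (h₁ : G₁.IsTree) (h₂ : G₂.IsTree)
    (r₁ : Fin n₁) (r₂ : Fin n₂)
    (R₁ R₂ R₁' R₂' R₁₂ : Polynomial ℤ)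
    (hR₁ : R₁.comp (Polynomial.X ^ 2) = recipQ G₁)
    (hR₂ : R₂.comp (Polynomial.X ^ 2) = recipQ G₂)
    (hR₁' : R₁'.comp (Polynomial.X ^ 2) =
      recipQ (G₁.induce ((({r₁}ᶜ : Finset (Fin n₁)) : Set (Fin n₁)))))
    (hR₂' : R₂'.comp (Polynomial.X ^ 2) =
      recipQ (G₂.induce ((({r₂}ᶜ : Finset (Fin n₂)) : Set (Fin n₂)))))
    (hR₁₂ : R₁₂.comp (Polynomial.X ^ 2) = recipQ (joinRooted G₁ r₁ G₂ r₂)) :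
    R₁₂ = R₁ * R₂ - Polynomial.X * R₁' * R₂' :=
  recip_of_rooted_sum_general G₁ G₂ r₁ r₂ R₁ R₂ R₁' R₂' R₁₂ hR₁ hR₂ hR₁' hR₂' hR₁₂
end

section
/- Let T be a Salem tree, i.e. a finite tree having exactly one eigenvalue greater than 2. Then either there exists a vertex v of T such that the forest T − v is cyclotomic, or there exists an edge {u, v} of T such that the forest obtained by deleting both u and v from T is cyclotomic. -/
open Polynomial

/-!
Suppose no vertex- or edge-deleted forest is cyclotomic. An eigenvector of such a forest with
eigenvalue `μ`, `|μ| > 2`, extended by zero and replaced by its absolute values, is a vector `x`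
on the whole tree with `x ⬝ᵥ A x > 2 x ⬝ᵥ x`; cutting it along a disconnection of its support, it
can be taken with connected support. Choose for every vertex `v` such a support avoiding `v`; it
lies in one branch at `v`, pointing to a neighbour `d v`. A tree has fewer edges than vertices, so
some edge `t p` has `d t = p` and `d p = t`, and a support avoiding both `t` and `p` is then
disjoint from, and not adjacent to, the support chosen for `t` or the one chosen for `p`. These
two vectors are orthogonal both for the dot product and for `A`, so they span a plane on which the
form exceeds `2`, which forces a second eigenvalue greater than `2`.
-/

open Matrix Finset

theorem Fintype.sum_eq_sum_subtype_of_forall_notMem {ι M : Type*} [Fintype ι] [AddCommMonoid M]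
    {W : Set ι} [Fintype W] (f : ι → M) (hf : ∀ i ∉ W, f i = 0) :
    ∑ i, f i = ∑ a : W, f a := by
  classical
  have h0 : ∑ i : {i // i ∉ W}, f i = 0 := Finset.sum_eq_zero fun i _ => hf i i.2
  rw [← Fintype.sum_subtype_add_sum_subtype (· ∈ W) f, h0, add_zero]
  convert rfl

namespace Matrix

variable {m : Type*} [Fintype m]

theorem exists_mulVec_eq_smul_of_mem_roots_charpoly [DecidableEq m] {K : Type*} [Field K]
    {A : Matrix m m K} {μ : K} (h : μ ∈ A.charpoly.roots) :
    ∃ v ≠ 0, A *ᵥ v = μ • v := by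
  have hμ := (Polynomial.mem_roots A.charpoly_monic.ne_zero).1 h
  rw [← mem_spectrum_iff_isRoot_charpoly, ← spectrum_toLin',
    ← Module.End.hasEigenvalue_iff_mem_spectrum] at hμ
  obtain ⟨v, hv⟩ := hμ.exists_hasEigenvector
  exact ⟨v, hv.2, by simpa using hv.apply_eq_smul⟩

theorem abs_dotProduct_mulVec_le {A : Matrix m m ℝ} (hA : ∀ i j, 0 ≤ A i j) (x : m → ℝ) :
    |x ⬝ᵥ (A *ᵥ x)| ≤ |x| ⬝ᵥ (A *ᵥ |x|) := by
  simp only [dotProduct, mulVec, Finset.mul_sum]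
  refine (abs_sum_le_sum_abs _ _).trans (sum_le_sum fun i _ => ?_)
  refine (abs_sum_le_sum_abs _ _).trans_eq (sum_congr rfl fun j _ => ?_)
  rw [abs_mul, abs_mul, abs_of_nonneg (hA i j), Pi.abs_apply, Pi.abs_apply]

section Extension

variable {R : Type*} [NonUnitalNonAssocSemiring R] {W : Set m} [Fintype W] {x : m → R}
  {w : W → R}

theorem dotProduct_eq_of_extend (hxw : ∀ a : W, x a = w a) (hx0 : ∀ i ∉ W, x i = 0) :
    x ⬝ᵥ x = w ⬝ᵥ w := by
  rw [dotProduct, Fintype.sum_eq_sum_subtype_of_forall_notMem (W := W) _ fun i hi => by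
    simp [hx0 i hi]]
  exact sum_congr rfl fun a _ => by rw [hxw]

theorem dotProduct_mulVec_eq_of_extend (A : Matrix m m R) (hxw : ∀ a : W, x a = w a)
    (hx0 : ∀ i ∉ W, x i = 0) :
    x ⬝ᵥ (A *ᵥ x) = w ⬝ᵥ (A.submatrix (↑) (↑) *ᵥ w) := by
  rw [dotProduct, Fintype.sum_eq_sum_subtype_of_forall_notMem (W := W) _ fun i hi => by
    simp [hx0 i hi]]
  refine sum_congr rfl fun a _ => ?_
  rw [hxw, mulVec, dotProduct, Fintype.sum_eq_sum_subtype_of_forall_notMem (W := W) _ fun i hi => by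
    simp [hx0 i hi]]
  simp only [hxw]
  rfl

end Extension

namespace IsHermitian

variable [DecidableEq m] {A : Matrix m m ℝ} (hA : A.IsHermitian)

theorem dotProduct_mulVec_sub_eq_sum (c : ℝ) (x : m → ℝ) :
    x ⬝ᵥ (A *ᵥ x) - c * (x ⬝ᵥ x) =
      ∑ i, (hA.eigenvalues i - c) * (x ⬝ᵥ hA.eigenvectorBasis i) ^ 2 := by
  set U : Matrix m m ℝ := (hA.eigenvectorUnitary : Matrix m m ℝ)
  have hcoord : ∀ i, x ⬝ᵥ hA.eigenvectorBasis i = (x ᵥ* U) i := fun _ => rfl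
  have hU : U * Uᵀ = 1 := by
    simpa [U, star_eq_conjTranspose] using Unitary.mul_star_self_of_mem hA.eigenvectorUnitary.2
  have hquad : x ⬝ᵥ (A *ᵥ x) = ∑ i, hA.eigenvalues i * (x ᵥ* U) i ^ 2 := by
    have hA' : A = U * diagonal hA.eigenvalues * Uᵀ := by
      simpa [U, Unitary.conjStarAlgAut_apply, star_eq_conjTranspose] using hA.spectral_theorem
    conv_lhs => rw [hA']
    rw [← mulVec_mulVec, ← mulVec_mulVec, dotProduct_mulVec, mulVec_transpose]
    simp only [dotProduct, mulVec_diagonal]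
    exact sum_congr rfl fun i _ => by ring
  have hnorm : x ⬝ᵥ x = ∑ i, (x ᵥ* U) i ^ 2 :=
    calc x ⬝ᵥ x = x ⬝ᵥ ((U * Uᵀ) *ᵥ x) := by rw [hU, one_mulVec]
      _ = ∑ i, (x ᵥ* U) i ^ 2 := by
        rw [← mulVec_mulVec, dotProduct_mulVec, mulVec_transpose]
        simp only [dotProduct, sq]
  simp only [hcoord, hquad, hnorm, mul_sum, ← sum_sub_distrib]
  exact sum_congr rfl fun i _ => by ring

theorem dotProduct_mulVec_sub_nonpos {c : ℝ} {i₀ : m} (hle : ∀ i ≠ i₀, hA.eigenvalues i ≤ c)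
    {x : m → ℝ} (hx : x ⬝ᵥ hA.eigenvectorBasis i₀ = 0) : x ⬝ᵥ (A *ᵥ x) - c * (x ⬝ᵥ x) ≤ 0 := by
  rw [hA.dotProduct_mulVec_sub_eq_sum]
  refine sum_nonpos fun i _ => ?_
  rcases eq_or_ne i i₀ with rfl | hi
  · simp [hx]
  · exact mul_nonpos_of_nonpos_of_nonneg (sub_nonpos.2 (hle i hi)) (sq_nonneg _)

/-- The form `x ↦ x ⬝ᵥ A x - c x ⬝ᵥ x` is positive definite on the plane spanned by `y` and `z`,
whereas it is nonpositive on a hyperplane if at most one eigenvalue exceeds `c`. -/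
theorem two_le_card_eigenvalues_gt {c : ℝ} {y z : m → ℝ}
    (hy : c * (y ⬝ᵥ y) < y ⬝ᵥ (A *ᵥ y)) (hz : c * (z ⬝ᵥ z) < z ⬝ᵥ (A *ᵥ z))
    (hyz : y ⬝ᵥ z = 0) (hAyz : y ⬝ᵥ (A *ᵥ z) = 0) :
    2 ≤ #{i | c < hA.eigenvalues i} := by
  by_contra! hcard
  have hypos := sub_pos.2 hy
  rw [hA.dotProduct_mulVec_sub_eq_sum] at hypos
  obtain ⟨i₀, -, hi₀⟩ : ∃ i ∈ univ,
      (0 : ℝ) < (hA.eigenvalues i - c) * (y ⬝ᵥ hA.eigenvectorBasis i) ^ 2 :=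
    exists_lt_of_sum_lt (by simpa using hypos)
  have hc : c < hA.eigenvalues i₀ := by nlinarith [sq_nonneg (y ⬝ᵥ hA.eigenvectorBasis i₀)]
  have hle : ∀ i ≠ i₀, hA.eigenvalues i ≤ c := by
    have hcard' : #{i | c < hA.eigenvalues i} ≤ 1 := by omega
    exact fun i hi => not_lt.1 fun h => hi (card_le_one.1 hcard' i (by simpa) i₀ (by simpa))
  set a := z ⬝ᵥ hA.eigenvectorBasis i₀
  set b := y ⬝ᵥ hA.eigenvectorBasis i₀
  have ha : a ≠ 0 := fun h => by linarith [hA.dotProduct_mulVec_sub_nonpos hle h]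
  have hAT : Aᵀ = A := (conjTranspose_eq_transpose_of_trivial A).symm.trans hA
  have hzy : z ⬝ᵥ (A *ᵥ y) = 0 := by
    rw [dotProduct_mulVec, ← mulVec_transpose, hAT, dotProduct_comm, hAyz]
  have hw := hA.dotProduct_mulVec_sub_nonpos hle (x := a • y - b • z) (by
    simp only [sub_dotProduct, smul_dotProduct, smul_eq_mul, a, b]
    ring)
  have hexp : (a • y - b • z) ⬝ᵥ (A *ᵥ (a • y - b • z)) -
        c * ((a • y - b • z) ⬝ᵥ (a • y - b • z)) =
      a ^ 2 * (y ⬝ᵥ (A *ᵥ y) - c * (y ⬝ᵥ y)) + b ^ 2 * (z ⬝ᵥ (A *ᵥ z) - c * (z ⬝ᵥ z)) := by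
    simp only [mulVec_sub, mulVec_smul, dotProduct_sub, sub_dotProduct, dotProduct_smul,
      smul_dotProduct, smul_eq_mul, hAyz, hzy, hyz, dotProduct_comm z y]
    ring
  have hapos : 0 < a ^ 2 := sq_pos_of_ne_zero ha
  nlinarith [sq_nonneg b]

end IsHermitian

end Matrix

namespace SimpleGraph

section Tree

variable {V : Type*} (G : SimpleGraph V)

def Separated (S T : Set V) : Prop :=
  ∀ a ∈ S, ∀ b ∈ T, a ≠ b ∧ ¬ G.Adj a b

/-- Equivalent to `(G.induce S).Preconnected`, stated through cuts. -/
def IsPreconnectedSet (S : Set V) : Prop :=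
  ∀ T ⊆ S, T.Nonempty → T ≠ S → ∃ a ∈ T, ∃ b ∈ S \ T, G.Adj a b

def IsFirstStep (t u s : V) : Prop :=
  G.Adj t u ∧ G.dist u s + 1 = G.dist t s

variable {G}

theorem Separated.symm {S T : Set V} (h : G.Separated S T) : G.Separated T S :=
  fun a ha b hb => ⟨(h b hb a ha).1.symm, fun hab => (h b hb a ha).2 hab.symm⟩

theorem IsFirstStep.not_isFirstStep_swap {t p s : V} (h : G.IsFirstStep t p s) :
    ¬ G.IsFirstStep p t s :=
  fun h' => by linarith [h.2, h'.2]

theorem Connected.exists_isFirstStep (hG : G.Connected) {t s : V} (hts : t ≠ s) :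
    ∃ u, G.IsFirstStep t u s := by
  obtain ⟨p, hp⟩ := hG.exists_walk_length_eq_dist t s
  have hnil : ¬ p.Nil := fun h => hts h.eq
  refine ⟨p.snd, p.adj_snd hnil, ?_⟩
  have htail : G.dist p.snd s ≤ p.tail.length := dist_le p.tail
  have htri : G.dist t s ≤ G.dist t p.snd + G.dist p.snd s := hG.dist_triangle
  have := p.length_tail_add_one hnil
  rw [dist_eq_one_iff_adj.2 (p.adj_snd hnil)] at htri
  omega

theorem IsTree.isFirstStep_unique (hG : G.IsTree) {t u₁ u₂ s : V} (h₁ : G.IsFirstStep t u₁ s)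
    (h₂ : G.IsFirstStep t u₂ s) : u₁ = u₂ := by
  obtain ⟨q₁, hq₁⟩ := hG.connected.exists_walk_length_eq_dist u₁ s
  obtain ⟨q₂, hq₂⟩ := hG.connected.exists_walk_length_eq_dist u₂ s
  have hp₁ := (Walk.cons h₁.1 q₁).isPath_of_length_eq_dist (by simp [hq₁, h₁.2])
  have hp₂ := (Walk.cons h₂.1 q₂).isPath_of_length_eq_dist (by simp [hq₂, h₂.2])
  simpa using congrArg Walk.snd ((hG.existsUnique_path t s).unique hp₁ hp₂)

theorem IsFirstStep.of_adj_of_dist_eq (hG : G.Connected) {t u a b : V}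
    (h : G.IsFirstStep t u a) (hab : G.Adj a b) (hdist : G.dist t b = G.dist t a + 1) :
    G.IsFirstStep t u b := by
  refine ⟨h.1, ?_⟩
  have h₁ : G.dist u b ≤ G.dist u a + G.dist a b := hG.dist_triangle
  have h₂ : G.dist t b ≤ G.dist t u + G.dist u b := hG.dist_triangle
  rw [dist_eq_one_iff_adj.2 hab] at h₁
  rw [dist_eq_one_iff_adj.2 h.1] at h₂
  linarith [h.2]

theorem IsTree.isFirstStep_of_adj (hG : G.IsTree) {t u a b : V} (h : G.IsFirstStep t u a)
    (hab : G.Adj a b) (hbt : b ≠ t) : G.IsFirstStep t u b := by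
  rcases hG.dist_eq_dist_add_one_of_adj t hab with hdist | hdist
  · obtain ⟨u', hu'⟩ := hG.connected.exists_isFirstStep hbt.symm
    rwa [hG.isFirstStep_unique h (hu'.of_adj_of_dist_eq hG.connected hab.symm hdist)]
  · exact h.of_adj_of_dist_eq hG.connected hab hdist

theorem IsTree.exists_forall_isFirstStep (hG : G.IsTree) {S : Set V} (hS : G.IsPreconnectedSet S)
    (hne : S.Nonempty) {t : V} (ht : t ∉ S) : ∃ u, ∀ s ∈ S, G.IsFirstStep t u s := by
  obtain ⟨s₀, hs₀⟩ := hne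
  obtain ⟨u, hu⟩ := hG.connected.exists_isFirstStep (ne_of_mem_of_not_mem hs₀ ht).symm
  refine ⟨u, ?_⟩
  by_contra! ⟨s, hs, hsu⟩
  obtain ⟨a, ⟨-, ha⟩, b, ⟨hbS, hb⟩, hab⟩ := hS {s ∈ S | G.IsFirstStep t u s} (Set.sep_subset _ _)
    ⟨s₀, hs₀, hu⟩ fun h => hsu (h.superset hs).2
  exact hb ⟨hbS, hG.isFirstStep_of_adj ha hab (ne_of_mem_of_not_mem hbS ht)⟩

theorem IsTree.isFirstStep_swap_of_ne (hG : G.IsTree) {t p u s : V} (htp : G.Adj t p)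
    (h : G.IsFirstStep t u s) (hup : u ≠ p) : G.IsFirstStep p t s := by
  have hts : G.dist s t = G.dist t s := dist_comm
  have hps : G.dist s p = G.dist p s := dist_comm
  rcases hG.dist_eq_dist_add_one_of_adj s htp with hdist | hdist
  · exact absurd (hG.isFirstStep_unique h ⟨htp, by omega⟩) hup
  · exact ⟨htp.symm, by omega⟩

theorem IsTree.separated_of_isFirstStep (hG : G.IsTree) {t p : V} {S T : Set V}
    (hS : ∀ s ∈ S, G.IsFirstStep t p s ∧ s ≠ p) (hT : ∀ s ∈ T, G.IsFirstStep p t s) :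
    G.Separated S T := by
  intro a ha b hb
  obtain ⟨ha, hap⟩ := hS a ha
  refine ⟨fun hab => ha.not_isFirstStep_swap (hab ▸ hT b hb), fun hab => ?_⟩
  rcases eq_or_ne b t with rfl | hbt
  · have hpa : G.dist p a = 0 := by linarith [ha.2, dist_eq_one_iff_adj.2 hab.symm]
    exact hap (hG.connected.dist_eq_zero_iff.1 hpa).symm
  · exact (hG.isFirstStep_of_adj ha hab hbt).not_isFirstStep_swap (hT b hb)

theorem IsTree.exists_apply_apply_eq [Fintype V] (hG : G.IsTree) (d : V → V)
    (hd : ∀ v, G.Adj v (d v)) : ∃ v, d (d v) = v := by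
  classical
  have hcard : #G.edgeFinset < #(univ : Finset V) := by
    rw [card_univ, ← hG.card_edgeFinset]
    omega
  obtain ⟨v, -, w, -, hvw, heq⟩ := exists_ne_map_eq_of_card_lt_of_maps_to hcard
    (f := fun v => s(v, d v)) fun v _ => by simpa using hd v
  rcases Sym2.eq_iff.1 heq with ⟨rfl, -⟩ | ⟨rfl, h⟩
  · exact absurd rfl hvw
  · exact ⟨w, h⟩

theorem IsTree.exists_separated [Fintype V] (hG : G.IsTree) (P : Set V → Prop)
    (hP : ∀ S, P S → S.Nonempty ∧ G.IsPreconnectedSet S)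
    (hv : ∀ v, ∃ S, P S ∧ v ∉ S) (he : ∀ u v, G.Adj u v → ∃ S, P S ∧ u ∉ S ∧ v ∉ S) :
    ∃ S T, P S ∧ P T ∧ G.Separated S T := by
  choose S hS hvS using hv
  choose d hd using fun v => hG.exists_forall_isFirstStep (hP _ (hS v)).2 (hP _ (hS v)).1 (hvS v)
  have hadj : ∀ v, G.Adj v (d v) := fun v =>
    let ⟨s, hs⟩ := (hP _ (hS v)).1
    (hd v s hs).1
  obtain ⟨t, ht⟩ := hG.exists_apply_apply_eq d hadj
  obtain ⟨S', hS', htS', hpS'⟩ := he t (d t) (hadj t)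
  obtain ⟨u, hu⟩ := hG.exists_forall_isFirstStep (hP _ hS').2 (hP _ hS').1 htS'
  rcases eq_or_ne u (d t) with rfl | hup
  · refine ⟨S', S (d t), hS', hS _, hG.separated_of_isFirstStep
      (fun s hs => ⟨hu s hs, ne_of_mem_of_not_mem hs hpS'⟩) fun s hs => ?_⟩
    simpa [ht] using hd (d t) s hs
  · exact ⟨S', S t, hS', hS t, hG.separated_of_isFirstStep
      (fun s hs => ⟨hG.isFirstStep_swap_of_ne (hadj t) (hu s hs) hup, ne_of_mem_of_not_mem hs htS'⟩)
      (hd t)⟩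

end Tree

section Spectral

variable {V : Type*} [Fintype V] {G : SimpleGraph V}

theorem Separated.dotProduct_eq_zero {y z : V → ℝ}
    (h : G.Separated (Function.support y) (Function.support z)) : y ⬝ᵥ z = 0 :=
  sum_eq_zero fun i _ => by
    by_contra hyz
    exact (h i (left_ne_zero_of_mul hyz) i (right_ne_zero_of_mul hyz)).1 rfl

variable [DecidableRel G.Adj]

theorem Separated.dotProduct_adjMatrix_mulVec_eq_zero {y z : V → ℝ}
    (h : G.Separated (Function.support y) (Function.support z)) :
    y ⬝ᵥ (G.adjMatrix ℝ *ᵥ z) = 0 := by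
  rw [dotProduct_mulVec_adjMatrix]
  refine sum_eq_zero fun i _ => sum_eq_zero fun j _ => ?_
  split_ifs with hij
  · by_contra hyz
    exact (h i (left_ne_zero_of_mul hyz) j (right_ne_zero_of_mul hyz)).2 hij
  · rfl

variable (G)

def IsExcessSupport (c : ℝ) (S : Set V) : Prop :=
  ∃ x : V → ℝ, c * (x ⬝ᵥ x) < x ⬝ᵥ (G.adjMatrix ℝ *ᵥ x) ∧ Function.support x = S ∧
    G.IsPreconnectedSet S

variable {G}

theorem IsExcessSupport.nonempty {c : ℝ} {S : Set V} (h : G.IsExcessSupport c S) :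
    S.Nonempty := by
  obtain ⟨x, hx, rfl, -⟩ := h
  exact Function.support_nonempty_iff.2 fun hx0 => by simp [hx0] at hx

theorem exists_isExcessSupport_subset {c : ℝ} {y : V → ℝ}
    (hy : c * (y ⬝ᵥ y) < y ⬝ᵥ (G.adjMatrix ℝ *ᵥ y)) :
    ∃ S ⊆ Function.support y, G.IsExcessSupport c S := by
  -- A cut of the support of a minimal `x` splits `x` into two non-interacting pieces, one of which
  -- would again qualify.
  obtain ⟨x, ⟨hx, hxy⟩, hmin⟩ := (measure fun x : V → ℝ => (Function.support x).ncard).wf.has_min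
    {x | c * (x ⬝ᵥ x) < x ⬝ᵥ (G.adjMatrix ℝ *ᵥ x) ∧ Function.support x ⊆ Function.support y}
    ⟨y, hy, subset_rfl⟩
  refine ⟨_, hxy, x, hx, rfl, fun T hTx hT hTne => ?_⟩
  by_contra! hcut
  set x₁ := T.indicator x
  set x₂ := Tᶜ.indicator x
  have hsep : G.Separated (Function.support x₁) (Function.support x₂) := by
    rw [Set.support_indicator, Set.support_indicator]
    exact fun a ha b hb => ⟨ne_of_mem_of_not_mem ha.1 hb.1, hcut a ha.1 b ⟨hb.2, hb.1⟩⟩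
  have hexcess : c * (x₁ ⬝ᵥ x₁) < x₁ ⬝ᵥ (G.adjMatrix ℝ *ᵥ x₁) ∨
      c * (x₂ ⬝ᵥ x₂) < x₂ ⬝ᵥ (G.adjMatrix ℝ *ᵥ x₂) := by
    by_contra! h
    have hsum : x₁ + x₂ = x := T.indicator_self_add_compl x
    rw [← hsum] at hx
    simp only [mulVec_add, dotProduct_add, add_dotProduct, hsep.dotProduct_eq_zero,
      hsep.symm.dotProduct_eq_zero, hsep.dotProduct_adjMatrix_mulVec_eq_zero,
      hsep.symm.dotProduct_adjMatrix_mulVec_eq_zero] at hx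
    linarith
  have hx₁ : Function.support x₁ ⊂ Function.support x := by
    rw [Set.support_indicator, Set.inter_eq_left.2 hTx]
    exact hTx.ssubset_of_ne hTne
  have hx₂ : Function.support x₂ ⊂ Function.support x := by
    rw [Set.support_indicator]
    obtain ⟨a, ha⟩ := hT
    exact Set.inter_subset_right.ssubset_of_ne fun h => (h.superset (hTx ha)).1 ha
  rcases hexcess with h | h
  · exact hmin x₁ ⟨h, hx₁.subset.trans hxy⟩ (Set.ncard_lt_ncard hx₁)
  · exact hmin x₂ ⟨h, hx₂.subset.trans hxy⟩ (Set.ncard_lt_ncard hx₂)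

end Spectral

section AdjEigs

variable {V : Type} [Fintype V] (G : SimpleGraph V) [DecidableRel G.Adj]

theorem adjEigs_eq_roots [DecidableEq V] : adjEigs G = (G.adjMatrix ℝ).charpoly.roots := by
  unfold adjEigs
  congr!

theorem card_filter_adjEigs [DecidableEq V] (c : ℝ) :
    Multiset.card ((adjEigs G).filter (c < ·)) =
      #{i | c < (G.isHermitian_adjMatrix ℝ).eigenvalues i} := by
  rw [adjEigs_eq_roots, (G.isHermitian_adjMatrix ℝ).roots_charpoly_eq_eigenvalues,
    Multiset.filter_map, Multiset.card_map]
  rfl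

theorem exists_excess_of_mem_adjEigs_induce {W : Set V} [Fintype W] {μ c : ℝ}
    (hμ : μ ∈ adjEigs (G.induce W)) (hc : c < |μ|) :
    ∃ y : V → ℝ, Function.support y ⊆ W ∧ c * (y ⬝ᵥ y) < y ⬝ᵥ (G.adjMatrix ℝ *ᵥ y) := by
  classical
  rw [adjEigs_eq_roots] at hμ
  obtain ⟨w, hw0, hw⟩ := exists_mulVec_eq_smul_of_mem_roots_charpoly hμ
  let y : V → ℝ := fun i => if h : i ∈ W then |w ⟨i, h⟩| else 0
  have hyw : ∀ a : W, y a = |w| a := fun a => dif_pos a.2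
  have hy0 : ∀ i ∉ W, y i = 0 := fun i hi => dif_neg hi
  have hM : (G.adjMatrix ℝ).submatrix ((↑) : W → V) (↑) = (G.induce W).adjMatrix ℝ :=
    (Embedding.induce W).submatrix_adjMatrix ℝ
  have hM0 : ∀ a b, 0 ≤ (G.induce W).adjMatrix ℝ a b := fun a b => by
    rw [adjMatrix_apply]
    split_ifs <;> norm_num
  have hwpos : 0 < w ⬝ᵥ w := by simpa using dotProduct_star_self_pos_iff.2 hw0
  refine ⟨y, fun i hi => by_contra fun h => hi (hy0 i h), ?_⟩
  calc c * (y ⬝ᵥ y) = c * (w ⬝ᵥ w) := by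
        rw [dotProduct_eq_of_extend hyw hy0]
        simp only [dotProduct, Pi.abs_apply, abs_mul_abs_self]
    _ < |μ| * (w ⬝ᵥ w) := mul_lt_mul_of_pos_right hc hwpos
    _ = |w ⬝ᵥ ((G.induce W).adjMatrix ℝ *ᵥ w)| := by
        rw [hw, dotProduct_smul, smul_eq_mul, abs_mul, abs_of_pos hwpos]
    _ ≤ |w| ⬝ᵥ ((G.induce W).adjMatrix ℝ *ᵥ |w|) := abs_dotProduct_mulVec_le hM0 w
    _ = y ⬝ᵥ (G.adjMatrix ℝ *ᵥ y) := by rw [dotProduct_mulVec_eq_of_extend _ hyw hy0, hM]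

theorem exists_isExcessSupport_subset_of_not_cyclotomic {W : Set V} [Fintype W]
    (h : ¬ ∀ μ ∈ adjEigs (G.induce W), -2 ≤ μ ∧ μ ≤ 2) :
    ∃ S ⊆ W, G.IsExcessSupport 2 S := by
  simp only [not_forall, not_and_or, not_le] at h
  obtain ⟨μ, hμ, hμ2⟩ := h
  obtain ⟨y, hyW, hy⟩ := G.exists_excess_of_mem_adjEigs_induce hμ
    (lt_abs.2 (hμ2.symm.imp id fun h => by linarith))
  obtain ⟨S, hSy, hS⟩ := exists_isExcessSupport_subset hy
  exact ⟨S, hSy.trans hyW, hS⟩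

end AdjEigs

end SimpleGraph

open SimpleGraph

/-- Every Salem tree (a tree with exactly one eigenvalue greater than 2) either has a
vertex whose deletion leaves a cyclotomic forest, or an edge whose two endvertices'
deletion leaves a cyclotomic forest. -/
theorem salem_tree_structure {n : ℕ} (G : SimpleGraph (Fin n)) (hT : G.IsTree)
    (hS : Multiset.card ((adjEigs G).filter (fun μ => 2 < μ)) = 1) :
    (∃ v : Fin n,
      ∀ μ ∈ adjEigs (G.induce ((({v}ᶜ : Finset (Fin n)) : Set (Fin n)))),
        -2 ≤ μ ∧ μ ≤ 2) ∨
    (∃ u v : Fin n, G.Adj u v ∧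
      ∀ μ ∈ adjEigs (G.induce ((({u, v}ᶜ : Finset (Fin n)) : Set (Fin n)))),
        -2 ≤ μ ∧ μ ≤ 2) := by
  classical
  by_contra h
  simp only [not_or, not_exists, not_and] at h
  obtain ⟨hv, he⟩ := h
  obtain ⟨S, T, ⟨y, hy, rfl, -⟩, ⟨z, hz, rfl, -⟩, hsep⟩ := hT.exists_separated
    (G.IsExcessSupport 2) (fun S hS => ⟨hS.nonempty, let ⟨_, _, _, hc⟩ := hS; hc⟩)
    (fun v => by
      obtain ⟨S, hSv, hS⟩ := G.exists_isExcessSupport_subset_of_not_cyclotomic (hv v)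
      exact ⟨S, hS, fun h => by simpa using hSv h⟩)
    (fun u v huv => by
      obtain ⟨S, hSuv, hS⟩ := G.exists_isExcessSupport_subset_of_not_cyclotomic (he u v huv)
      exact ⟨S, hS, fun h => by simpa using hSuv h, fun h => by simpa using hSuv h⟩)
  have := (G.isHermitian_adjMatrix ℝ).two_le_card_eigenvalues_gt hy hz hsep.dotProduct_eq_zero
    hsep.dotProduct_adjMatrix_mulVec_eq_zero
  rw [← card_filter_adjEigs] at this
  omega
end
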